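/- arXiv:2106.09836 — 4 statements merged into one kernel-verified Lean document; each statement's English description precedes it below -/
import Mathlib

section
/- For cadlag functions f₁, f₂ : [0,∞) → ℝ, define s(x,y) = sup_{z ∈ [x,y]} (f₂(z) - f₁(z⁻)). If f₁ has only nonnegative jumps (f₁(z) ≥ f₁(z⁻) for all z), then for each fixed x, the function y ↦ s(x,y) is nondecreasing and right-continuous (cadlag). -/
open Filter Set

/-- Left limit with the convention `f(0⁻) = 0`. -/
noncomputable def lml (f : ℝ → ℝ) (z : ℝ) : ℝ := if z ≤ 0 then 0 else Function.leftLim f z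

/-- Cadlag on `[0, ∞)`: right-continuous at every `x ≥ 0`, left limits exist at every `x > 0`. -/
def Cadlag (f : ℝ → ℝ) : Prop :=
  (∀ x : ℝ, 0 ≤ x → ContinuousWithinAt f (Set.Ici x) x) ∧
  (∀ x : ℝ, 0 < x → ∃ l : ℝ, Filter.Tendsto f (nhdsWithin x (Set.Iio x)) (nhds l))

/-- All jumps are nonnegative (with the convention `f(0⁻) = 0`). -/
def NonnegJumps (f : ℝ → ℝ) : Prop := ∀ z : ℝ, 0 ≤ z → lml f z ≤ f z

/-- `S f₁ f₂ x y = sup_{z ∈ [x,y]} (f₂ z - f₁ (z⁻))`. -/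
noncomputable def S (f₁ f₂ : ℝ → ℝ) (x y : ℝ) : ℝ :=
  sSup ((fun z => f₂ z - lml f₁ z) '' Set.Icc x y)

/-- `Sm f₁ f₂ x y = sup_{z ∈ [x,y)} (f₂ z - f₁ (z⁻))`. -/
noncomputable def Sm (f₁ f₂ : ℝ → ℝ) (x y : ℝ) : ℝ :=
  sSup ((fun z => f₂ z - lml f₁ z) '' Set.Ico x y)

/-! Write `g z = f₂ z - f₁ (z⁻)`, so that `S x y = sup_{[x, y]} g`; it is finite because cadlag
functions, and hence their left limits, are bounded on compact intervals. Monotonicity in `y` is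
clear. For right-continuity at `y`, the left limits `f₁ (z⁻)` tend to `f₁ y` as `z ↓ y`, so `g`
tends to `f₂ y - f₁ y` from the right, and this is at most `g y` exactly because the jump of `f₁`
at `y` is nonnegative. Hence `g` is upper semicontinuous from the right at `y`, and a running
supremum of such a function is right-continuous. -/

open Topology Bornology Pointwise

lemma IsCompact.isBounded_image_of_forall_nhdsWithin {X β : Type*} [TopologicalSpace X]
    [Bornology β] {K : Set X} {f : X → β} (hK : IsCompact K)
    (hf : ∀ x ∈ K, ∃ t ∈ 𝓝[K] x, IsBounded (f '' t)) : IsBounded (f '' K) :=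
  hK.induction_on (p := fun t => IsBounded (f '' t)) (by simp)
    (fun _ _ hst ht => ht.subset (image_mono hst))
    (fun _ _ hs ht => by simpa only [image_union, isBounded_union] using ⟨hs, ht⟩) hf

section SupOverIcc

variable {α β : Type*} [LinearOrder α] [ConditionallyCompleteLinearOrder β] {g : α → β} {x : α}

lemma monotoneOn_sSup_image_Icc (hbdd : ∀ y, BddAbove (g '' Icc x y)) :
    MonotoneOn (fun y => sSup (g '' Icc x y)) (Ici x) :=
  fun _ hy₁ y₂ _ h12 =>
    csSup_le_csSup (hbdd y₂) ((nonempty_Icc.2 hy₁).image g) (image_mono (Icc_subset_Icc_right h12))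

lemma continuousWithinAt_sSup_image_Icc [TopologicalSpace α] [OrderTopology α] [NoMaxOrder α]
    [TopologicalSpace β] [OrderTopology β] [DenselyOrdered β] {y : α} (hxy : x ≤ y)
    (hbdd : ∀ y, BddAbove (g '' Icc x y)) (hg : UpperSemicontinuousWithinAt g (Ioi y) y) :
    ContinuousWithinAt (fun y' => sSup (g '' Icc x y')) (Ici y) y := by
  have hgy : g y ≤ sSup (g '' Icc x y) := le_csSup (hbdd y) (mem_image_of_mem g ⟨hxy, le_rfl⟩)
  rw [ContinuousWithinAt, tendsto_order]
  refine ⟨fun a ha => ?_, fun b hb => ?_⟩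
  · filter_upwards [self_mem_nhdsWithin] with y' hy'
    exact ha.trans_le (monotoneOn_sSup_image_Icc hbdd hxy (hxy.trans hy') hy')
  · obtain ⟨c, hyc, hcb⟩ := exists_between hb
    obtain ⟨u, hyu, hu⟩ := mem_nhdsGT_iff_exists_Ioo_subset.1 (hg c (hgy.trans_lt hyc))
    filter_upwards [Ico_mem_nhdsGE hyu] with y' hy'
    refine lt_of_le_of_lt (csSup_le ((nonempty_Icc.2 (hxy.trans hy'.1)).image g) ?_) hcb
    rintro _ ⟨z, hz, rfl⟩
    rcases le_or_gt z y with hzy | hyz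
    · exact (le_csSup (hbdd y) (mem_image_of_mem g ⟨hz.1, hzy⟩)).trans hyc.le
    · exact (hu ⟨hyz, hz.2.trans_lt hy'.2⟩).le

end SupOverIcc

namespace Cadlag

variable {f : ℝ → ℝ}

lemma tendsto_nhdsLT (hf : Cadlag f) {z : ℝ} (hz : 0 < z) :
    Tendsto f (𝓝[<] z) (𝓝 (Function.leftLim f z)) := by
  obtain ⟨l, hl⟩ := hf.2 z hz
  rwa [leftLim_eq_of_tendsto hl]

lemma exists_mem_nhdsWithin_isBounded_image (hf : Cadlag f) {t : ℝ} (ht : 0 ≤ t) :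
    ∃ s ∈ 𝓝[Ici 0] t, IsBounded (f '' s) := by
  obtain ⟨B, hB, hB_bdd⟩ := Metric.exists_isBounded_image_of_tendsto (hf.1 t ht)
  rcases ht.eq_or_lt with rfl | ht
  · exact ⟨B, hB, hB_bdd⟩
  obtain ⟨A, hA, hA_bdd⟩ := Metric.exists_isBounded_image_of_tendsto (hf.tendsto_nhdsLT ht)
  refine ⟨A ∪ B, mem_nhdsWithin_of_mem_nhds ?_, by
    simp only [image_union, isBounded_union, hA_bdd, hB_bdd, and_self]⟩
  rw [← nhdsLT_sup_nhdsGE]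
  exact ⟨mem_of_superset hA subset_union_left, mem_of_superset hB subset_union_right⟩

lemma isBounded_image_Icc (hf : Cadlag f) (Y : ℝ) : IsBounded (f '' Icc 0 Y) :=
  isCompact_Icc.isBounded_image_of_forall_nhdsWithin fun t ht => by
    obtain ⟨s, hs, hs_bdd⟩ := hf.exists_mem_nhdsWithin_isBounded_image ht.1
    exact ⟨s, nhdsWithin_mono t Icc_subset_Ici_self hs, hs_bdd⟩

lemma isBounded_lml_image_Icc (hf : Cadlag f) (Y : ℝ) : IsBounded (lml f '' Icc 0 Y) := by
  refine ((hf.isBounded_image_Icc Y).closure.insert 0).subset ?_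
  rintro _ ⟨z, hz, rfl⟩
  rcases hz.1.eq_or_lt with rfl | hz0
  · simp [lml]
  rw [lml, if_neg hz0.not_ge]
  refine mem_insert_of_mem _ (mem_closure_of_tendsto (hf.tendsto_nhdsLT hz0) ?_)
  filter_upwards [Ioo_mem_nhdsLT hz0] with w hw
  exact mem_image_of_mem f ⟨hw.1.le, hw.2.le.trans hz.2⟩

lemma tendsto_lml_nhdsGT (hf : Cadlag f) {y : ℝ} (hy : 0 ≤ y) :
    Tendsto (lml f) (𝓝[>] y) (𝓝 (f y)) := by
  rw [Metric.tendsto_nhds]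
  intro ε hε
  have hright : ∀ᶠ w in 𝓝[≥] y, dist (f w) (f y) < ε / 2 :=
    Metric.tendsto_nhds.1 (hf.1 y hy) _ (half_pos hε)
  obtain ⟨u, hyu, hu⟩ := mem_nhdsGE_iff_exists_Ico_subset.1 hright
  filter_upwards [Ioo_mem_nhdsGT hyu] with z hz
  have hz0 : 0 < z := hy.trans_lt hz.1
  rw [lml, if_neg hz0.not_ge]
  refine lt_of_le_of_lt (le_of_tendsto ((hf.tendsto_nhdsLT hz0).dist tendsto_const_nhds) ?_)
    (half_lt_self hε)
  filter_upwards [Ioo_mem_nhdsLT hz.1] with w hw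
  exact (hu ⟨hw.1.le, hw.2.trans hz.2⟩).le

end Cadlag

lemma bddAbove_sub_lml_image_Icc {f₁ f₂ : ℝ → ℝ} (h₁ : Cadlag f₁) (h₂ : Cadlag f₂) {x : ℝ}
    (hx : 0 ≤ x) (Y : ℝ) : BddAbove ((fun z => f₂ z - lml f₁ z) '' Icc x Y) := by
  refine ((h₂.isBounded_image_Icc Y).sub (h₁.isBounded_lml_image_Icc Y)).bddAbove.mono ?_
  rintro _ ⟨z, hz, rfl⟩
  have hz' : z ∈ Icc 0 Y := ⟨hx.trans hz.1, hz.2⟩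
  exact sub_mem_sub (mem_image_of_mem f₂ hz') (mem_image_of_mem (lml f₁) hz')

lemma upperSemicontinuousWithinAt_sub_lml {f₁ f₂ : ℝ → ℝ} (h₁ : Cadlag f₁) (h₂ : Cadlag f₂)
    {y : ℝ} (hy : 0 ≤ y) (hjump : lml f₁ y ≤ f₁ y) :
    UpperSemicontinuousWithinAt (fun z => f₂ z - lml f₁ z) (Ioi y) y := by
  have hlim : Tendsto (fun z => f₂ z - lml f₁ z) (𝓝[>] y) (𝓝 (f₂ y - f₁ y)) :=
    ((h₂.1 y hy).mono_left (nhdsWithin_mono y Ioi_subset_Ici_self)).sub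
      (h₁.tendsto_lml_nhdsGT hy)
  exact fun c hc => hlim.eventually_lt_const (by linarith)

theorem stmt1 (f₁ f₂ : ℝ → ℝ) (h₁ : Cadlag f₁) (h₂ : Cadlag f₂)
    (hj : NonnegJumps f₁) (x : ℝ) (hx : 0 ≤ x) :
    MonotoneOn (fun y => S f₁ f₂ x y) (Set.Ici x) ∧
    ∀ y : ℝ, x ≤ y → ContinuousWithinAt (fun y' => S f₁ f₂ x y') (Set.Ici y) y :=
  ⟨monotoneOn_sSup_image_Icc (bddAbove_sub_lml_image_Icc h₁ h₂ hx),
    fun y hy => continuousWithinAt_sSup_image_Icc hy (bddAbove_sub_lml_image_Icc h₁ h₂ hx)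
      (upperSemicontinuousWithinAt_sub_lml h₁ h₂ (hx.trans hy) (hj y (hx.trans hy)))⟩
end

section
/- Let f₁, f₂ be cadlag with nonnegative jumps, s(x,y) = sup_{z∈[x,y]}(f₂(z)-f₁(z⁻)), and r(z) = s(z,z) - s(0,z) - s(0,z⁻). For x ≤ y, let I_f(x,y) = {z ∈ [x,y] : s(z,z) = s(x,y)} and I_W(x,y) = {z ∈ [x,y] : r(z) = sup_{w∈[x,y]} r(w)}. Then inf I_W(x,y) ≤ inf I_f(x,y) and sup I_W(x,y) ≤ sup I_f(x,y). -/
open Filter Set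

/-- `r z = s(z,z) - s(0,z) - s(0,z⁻)`. -/
noncomputable def rW (f₁ f₂ : ℝ → ℝ) (z : ℝ) : ℝ :=
  S f₁ f₂ z z - S f₁ f₂ 0 z - Sm f₁ f₂ 0 z

/-!
Write `g z = f₂ z - f₁ (z⁻)`, so that `s(z,z) = g z`. Since `s(0,·)` and `s(0,·⁻)` are
nondecreasing, `r w - r z ≤ g w - g z` whenever `z ≤ w`. Hence if `z` maximises `g` and `w`
maximises `r` on `[x,y]` with `z ≤ w`, both sides vanish: `z` also maximises `r` and `w` also
maximises `g`. This exchange property yields both inequalities. Nonnegative jumps make `g` upper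
semicontinuous, so it attains its maximum on `[x,y]` and `I_f(x,y)` is nonempty.
-/

open Function Topology

theorem eq_sSup_image_iff_isMaxOn {α β : Type*} [ConditionallyCompleteLattice β] {f : α → β}
    {s : Set α} {z : α} (hbdd : BddAbove (f '' s)) (hz : z ∈ s) :
    f z = sSup (f '' s) ↔ IsMaxOn f s z :=
  ⟨fun h _ hw => h ▸ le_csSup hbdd (mem_image_of_mem f hw),
    fun h => ((h.isLUB hz).csSup_eq ⟨f z, mem_image_of_mem f hz⟩).symm⟩

theorem isMaxOn_exchange_of_sub_le_sub {α : Type*} [Preorder α] {g r : α → ℝ} {s : Set α}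
    (hrg : ∀ z ∈ s, ∀ w ∈ s, z ≤ w → r w - r z ≤ g w - g z) {z w : α} (hz : z ∈ s)
    (hw : w ∈ s) (hzw : z ≤ w) (hgz : IsMaxOn g s z) (hrw : IsMaxOn r s w) :
    IsMaxOn r s z ∧ IsMaxOn g s w := by
  have hdiff := hrg z hz w hw hzw
  have hg : g w ≤ g z := hgz hw
  have hr : r z ≤ r w := hrw hz
  refine ⟨isMaxOn_iff.2 fun u hu => ?_, isMaxOn_iff.2 fun u hu => ?_⟩
  · linarith [isMaxOn_iff.1 hrw u hu]
  · linarith [isMaxOn_iff.1 hgz u hu]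

theorem Real.sInf_le_sInf_of_forall_le_mem {A B : Set ℝ} (hA : A.Nonempty)
    (hA0 : ∀ a ∈ A, 0 ≤ a) (hB : BddBelow B) (h : ∀ a ∈ A, ∀ b ∈ B, a ≤ b → a ∈ B) :
    sInf B ≤ sInf A := by
  refine le_csInf hA fun a ha => ?_
  rcases B.eq_empty_or_nonempty with rfl | ⟨b, hb⟩
  · exact Real.sInf_empty ▸ hA0 a ha
  rcases le_total a b with hab | hba
  · exact csInf_le hB (h a ha b hb hab)
  · exact (csInf_le hB hb).trans hba

theorem Real.sSup_le_sSup_of_forall_le_mem {A B : Set ℝ} (hA : ∃ a ∈ A, 0 ≤ a)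
    (hA' : BddAbove A) (h : ∀ a ∈ A, ∀ b ∈ B, a ≤ b → b ∈ A) : sSup B ≤ sSup A := by
  obtain ⟨a, ha, ha0⟩ := hA
  refine Real.sSup_le (fun b hb => ?_) (ha0.trans (le_csSup hA' ha))
  rcases le_total b a with hba | hab
  · exact hba.trans (le_csSup hA' ha)
  · exact le_csSup hA' (h a ha b hb hab)

theorem tendsto_leftLim_nhdsWithin {β : Type*} [TopologicalSpace β] [T3Space β] {f : ℝ → β}
    {U : Set ℝ} (hU : IsOpen U) {c : ℝ} {L : β} (hf : Tendsto f (𝓝[U] c) (𝓝 L))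
    (hlim : ∀ᶠ w in 𝓝[U] c, ∃ l, Tendsto f (𝓝[<] w) (𝓝 l)) :
    Tendsto (leftLim f) (𝓝[U] c) (𝓝 L) := by
  refine (closed_nhds_basis L).tendsto_right_iff.2 fun K ⟨hK, hKc⟩ => ?_
  filter_upwards [eventually_eventually_nhdsWithin.2 (hf hK), hlim, self_mem_nhdsWithin]
    with w hwK ⟨l, hl⟩ hwU
  rw [hU.nhdsWithin_eq hwU] at hwK
  rw [leftLim_eq_of_tendsto hl]
  exact hKc.mem_of_tendsto hl (nhdsWithin_le_nhds hwK)

theorem upperSemicontinuousWithinAt_Ici_of_tendsto {g : ℝ → ℝ} {c l : ℝ}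
    (h : Tendsto g (𝓝[>] c) (𝓝 l)) (hl : l ≤ g c) : UpperSemicontinuousWithinAt g (Ici c) c := by
  intro y hy
  rw [← nhdsGT_sup_nhdsWithin_singleton, nhdsWithin_singleton]
  exact eventually_sup.2 ⟨h.eventually_lt_const (hl.trans_lt hy), hy⟩

theorem upperSemicontinuousAt_of_tendsto {g : ℝ → ℝ} {c l₁ l₂ : ℝ}
    (h₁ : Tendsto g (𝓝[<] c) (𝓝 l₁)) (h₂ : Tendsto g (𝓝[>] c) (𝓝 l₂))
    (hl₁ : l₁ ≤ g c) (hl₂ : l₂ ≤ g c) : UpperSemicontinuousAt g c := by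
  intro y hy
  rw [← nhdsNE_sup_pure, ← nhdsLT_sup_nhdsGT]
  exact eventually_sup.2 ⟨eventually_sup.2 ⟨h₁.eventually_lt_const (hl₁.trans_lt hy),
    h₂.eventually_lt_const (hl₂.trans_lt hy)⟩, hy⟩

section Cadlag

variable {f : ℝ → ℝ} {c : ℝ}

theorem lml_eqOn_leftLim : EqOn (lml f) (leftLim f) (Ioi 0) :=
  fun _ hz => if_neg (not_le.2 hz)

theorem Cadlag.tendsto_nhdsLT_s7 (h : Cadlag f) (hc : 0 < c) :
    Tendsto f (𝓝[<] c) (𝓝 (lml f c)) := by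
  obtain ⟨l, hl⟩ := h.2 c hc
  rwa [lml_eqOn_leftLim hc, leftLim_eq_of_tendsto hl]

theorem Cadlag.tendsto_lml_nhdsGT_s7 (h : Cadlag f) (hc : 0 ≤ c) :
    Tendsto (lml f) (𝓝[>] c) (𝓝 (f c)) := by
  have hlim : ∀ᶠ w in 𝓝[>] c, ∃ l, Tendsto f (𝓝[<] w) (𝓝 l) := by
    filter_upwards [self_mem_nhdsWithin] with w hw using h.2 w (hc.trans_lt hw)
  refine (tendsto_leftLim_nhdsWithin isOpen_Ioi
    ((h.1 c hc).mono_left (nhdsWithin_mono _ Ioi_subset_Ici_self)) hlim).congr' ?_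
  exact eventuallyEq_nhdsWithin_of_eqOn
    (lml_eqOn_leftLim.mono fun _ hw => hc.trans_lt hw) |>.symm

theorem Cadlag.tendsto_lml_nhdsLT (h : Cadlag f) (hc : 0 < c) :
    Tendsto (lml f) (𝓝[<] c) (𝓝 (lml f c)) := by
  have hpos : ∀ᶠ w in 𝓝[<] c, 0 < w := by
    filter_upwards [Ioo_mem_nhdsLT hc] with w hw using hw.1
  have hlim : ∀ᶠ w in 𝓝[<] c, ∃ l, Tendsto f (𝓝[<] w) (𝓝 l) := by
    filter_upwards [hpos] with w hw using h.2 w hw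
  refine (tendsto_leftLim_nhdsWithin isOpen_Iio (h.tendsto_nhdsLT_s7 hc) hlim).congr' ?_
  filter_upwards [hpos] with w hw using (lml_eqOn_leftLim hw).symm

end Cadlag

noncomputable def jumpValue (f₁ f₂ : ℝ → ℝ) (z : ℝ) : ℝ := f₂ z - lml f₁ z

section JumpValue

variable {f₁ f₂ : ℝ → ℝ}

theorem upperSemicontinuousOn_jumpValue (h₁ : Cadlag f₁) (h₂ : Cadlag f₂)
    (hj₁ : NonnegJumps f₁) (hj₂ : NonnegJumps f₂) {a b : ℝ} (ha : 0 ≤ a) :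
    UpperSemicontinuousOn (jumpValue f₁ f₂) (Icc a b) := by
  intro c hc
  have hc0 := ha.trans hc.1
  have hR : Tendsto (jumpValue f₁ f₂) (𝓝[>] c) (𝓝 (f₂ c - f₁ c)) :=
    ((h₂.1 c hc0).mono_left (nhdsWithin_mono _ Ioi_subset_Ici_self)).sub
      (h₁.tendsto_lml_nhdsGT_s7 hc0)
  have hRle : f₂ c - f₁ c ≤ jumpValue f₁ f₂ c := sub_le_sub_left (hj₁ c hc0) _
  obtain rfl | hpos := hc0.eq_or_lt
  · exact (upperSemicontinuousWithinAt_Ici_of_tendsto hR hRle).mono fun z hz => ha.trans hz.1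
  · have hL : Tendsto (jumpValue f₁ f₂) (𝓝[<] c) (𝓝 (lml f₂ c - lml f₁ c)) :=
      (h₂.tendsto_nhdsLT_s7 hpos).sub (h₁.tendsto_lml_nhdsLT hpos)
    exact (upperSemicontinuousAt_of_tendsto hL hR (sub_le_sub_right (hj₂ c hc0) _)
      hRle).upperSemicontinuousWithinAt _

theorem S_eq_sSup_jumpValue (x y : ℝ) : S f₁ f₂ x y = sSup (jumpValue f₁ f₂ '' Icc x y) := rfl

theorem S_self (z : ℝ) : S f₁ f₂ z z = jumpValue f₁ f₂ z := by
  rw [S_eq_sSup_jumpValue, Icc_self, image_singleton, csSup_singleton]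

theorem S_self_eq_S_iff_isMaxOn {x y z : ℝ} (hbdd : BddAbove (jumpValue f₁ f₂ '' Icc x y))
    (hz : z ∈ Icc x y) : S f₁ f₂ z z = S f₁ f₂ x y ↔ IsMaxOn (jumpValue f₁ f₂) (Icc x y) z := by
  rw [S_self, S_eq_sSup_jumpValue]
  exact eq_sSup_image_iff_isMaxOn hbdd hz

theorem monotoneOn_S {a b : ℝ} (hbdd : BddAbove (jumpValue f₁ f₂ '' Icc a b)) :
    MonotoneOn (S f₁ f₂ a) (Icc a b) := fun _ hz _ hz' hzz' =>
  csSup_le_csSup (hbdd.mono (image_mono (Icc_subset_Icc_right hz'.2)))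
    ((nonempty_Icc.2 hz.1).image _) (image_mono (Icc_subset_Icc_right hzz'))

-- `Sm f₁ f₂ 0 0 = sSup ∅ = 0`, which is below `Sm f₁ f₂ 0 z` because `jumpValue f₁ f₂ 0 ≥ 0`.
theorem monotoneOn_Sm_zero (hj₂ : NonnegJumps f₂) {b : ℝ}
    (hbdd : BddAbove (jumpValue f₁ f₂ '' Icc 0 b)) : MonotoneOn (Sm f₁ f₂ 0) (Icc 0 b) := by
  intro z hz z' hz' hzz'
  have hbdd' : BddAbove (jumpValue f₁ f₂ '' Ico 0 z') :=
    hbdd.mono (image_mono (Ico_subset_Icc_self.trans (Icc_subset_Icc_right hz'.2)))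
  obtain rfl | hpos := hz.1.eq_or_lt
  · obtain rfl | hpos' := hz'.1.eq_or_lt
    · rfl
    have h0 : 0 ≤ jumpValue f₁ f₂ 0 := by
      simpa [jumpValue, lml] using hj₂ 0 le_rfl
    rw [Sm, Ico_self, image_empty, Real.sSup_empty]
    exact h0.trans (le_csSup hbdd' (mem_image_of_mem _ ⟨le_rfl, hpos'⟩))
  · exact csSup_le_csSup hbdd' ((nonempty_Ico.2 hpos).image _)
      (image_mono (Ico_subset_Ico_right hzz'))

theorem rW_sub_rW_le (hj₂ : NonnegJumps f₂) {b z z' : ℝ}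
    (hbdd : BddAbove (jumpValue f₁ f₂ '' Icc 0 b)) (hz : z ∈ Icc 0 b) (hz' : z' ∈ Icc 0 b)
    (hzz' : z ≤ z') : rW f₁ f₂ z' - rW f₁ f₂ z ≤ jumpValue f₁ f₂ z' - jumpValue f₁ f₂ z := by
  have hS := monotoneOn_S hbdd hz hz' hzz'
  have hSm := monotoneOn_Sm_zero hj₂ hbdd hz hz' hzz'
  rw [rW, rW, S_self, S_self]
  linarith

end JumpValue

theorem stmt7 (f₁ f₂ : ℝ → ℝ) (h₁ : Cadlag f₁) (h₂ : Cadlag f₂)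
    (hj₁ : NonnegJumps f₁) (hj₂ : NonnegJumps f₂)
    (x y : ℝ) (hx : 0 ≤ x) (hxy : x ≤ y) :
    sInf {z | z ∈ Set.Icc x y ∧ rW f₁ f₂ z = sSup (rW f₁ f₂ '' Set.Icc x y)}
      ≤ sInf {z | z ∈ Set.Icc x y ∧ S f₁ f₂ z z = S f₁ f₂ x y} ∧
    sSup {z | z ∈ Set.Icc x y ∧ rW f₁ f₂ z = sSup (rW f₁ f₂ '' Set.Icc x y)}
      ≤ sSup {z | z ∈ Set.Icc x y ∧ S f₁ f₂ z z = S f₁ f₂ x y} := by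
  set g := jumpValue f₁ f₂
  obtain ⟨c, hc, hcmax⟩ := (upperSemicontinuousOn_jumpValue h₁ h₂ hj₁ hj₂ hx).exists_isMaxOn
    (nonempty_Icc.2 hxy) isCompact_Icc
  have hbdd : BddAbove (g '' Icc 0 y) :=
    (upperSemicontinuousOn_jumpValue h₁ h₂ hj₁ hj₂ le_rfl).bddAbove_of_isCompact isCompact_Icc
  have hrg : ∀ z ∈ Icc x y, ∀ w ∈ Icc x y, z ≤ w → rW f₁ f₂ w - rW f₁ f₂ z ≤ g w - g z :=
    fun z hz w hw => rW_sub_rW_le hj₂ hbdd ⟨hx.trans hz.1, hz.2⟩ ⟨hx.trans hw.1, hw.2⟩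
  have hrbdd : BddAbove (rW f₁ f₂ '' Icc x y) := by
    refine ⟨rW f₁ f₂ x + (g c - g x), forall_mem_image.2 fun z hz => ?_⟩
    have hdiff := hrg x ⟨le_rfl, hxy⟩ z hz hz.1
    have hgz : g z ≤ g c := hcmax hz
    linarith
  have hIF : {z | z ∈ Icc x y ∧ S f₁ f₂ z z = S f₁ f₂ x y} =
      {z | z ∈ Icc x y ∧ IsMaxOn g (Icc x y) z} :=
    Set.ext fun _ => and_congr_right (S_self_eq_S_iff_isMaxOn hcmax.bddAbove)
  have hIW : {z | z ∈ Icc x y ∧ rW f₁ f₂ z = sSup (rW f₁ f₂ '' Icc x y)} =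
      {z | z ∈ Icc x y ∧ IsMaxOn (rW f₁ f₂) (Icc x y) z} :=
    Set.ext fun _ => and_congr_right (eq_sSup_image_iff_isMaxOn hrbdd)
  rw [hIF, hIW]
  constructor
  · exact Real.sInf_le_sInf_of_forall_le_mem ⟨c, hc, hcmax⟩ (fun z hz => hx.trans hz.1.1)
      ⟨x, fun z hz => hz.1.1⟩ fun z hz w hw hzw =>
        ⟨hz.1, (isMaxOn_exchange_of_sub_le_sub hrg hz.1 hw.1 hzw hz.2 hw.2).1⟩
  · exact Real.sSup_le_sSup_of_forall_le_mem ⟨c, ⟨hc, hcmax⟩, hx.trans hc.1⟩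
      ⟨y, fun z hz => hz.1.2⟩ fun z hz w hw hzw =>
        ⟨hw.1, (isMaxOn_exchange_of_sub_le_sub hrg hz.1 hw.1 hzw hz.2 hw.2).2⟩
end

section
/- Let f: [0,∞)×{1,…,n} → ℝ consist of cadlag functions with nonnegative jumps and satisfy limsup_{t→∞} (f_{j+1}(t) - f_j(t)) = ∞ for all j = 1,…,n-1. Then for every k, any semi-infinite disjoint optimizer from (0,n)^k to (∞,1)^k must equal the k lowest constant paths [0,∞)×{n-k+1},…,[0,∞)×{n}; in particular f ∈ D^n_{↓-}. -/
open Filter Set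

/-- Jump times of an ordered, essentially disjoint `k`-tuple of paths from `(0,n)` to `(y,1)`.
Path `j` occupies line `i ∈ {1,…,n}` on the interval `[t j i, t j (i-1)]`. -/
def IsTuple (n k : ℕ) (y : ℝ) (t : Fin k → ℕ → ℝ) : Prop :=
  (∀ j, t j n = 0) ∧ (∀ j, t j 0 = y) ∧
  (∀ j, ∀ i : ℕ, i < n → t j (i + 1) ≤ t j i) ∧
  (∀ j : Fin k, ∀ hj : j.val + 1 < k, ∀ i : ℕ, i < n →
    t j i ≤ t ⟨j.val + 1, hj⟩ (i + 1))

/-- The measure `df` of the union of the paths of a disjoint `k`-tuple: on each line the raw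
sum of increments, corrected by subtracting atoms shared by consecutive touching paths. -/
noncomputable def unionLen (f : ℕ → ℝ → ℝ) (n k : ℕ) (t : Fin k → ℕ → ℝ) : ℝ :=
  ∑ i ∈ Finset.Icc 1 n,
    ((∑ j : Fin k, (f i (t j (i - 1)) - lml (f i) (t j i)))
      - ∑ j : Fin k, (if hj : j.val + 1 < k then
          (if t j (i - 1) = t ⟨j.val + 1, hj⟩ i then
            f i (t j (i - 1)) - lml (f i) (t j (i - 1)) else 0)
        else 0))

/-- `t` is a disjoint optimizer from `(0,n)^k` to `(y,1)^k` in `f`. -/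
def IsOpt (f : ℕ → ℝ → ℝ) (n k : ℕ) (y : ℝ) (t : Fin k → ℕ → ℝ) : Prop :=
  IsTuple n k y t ∧ ∀ s : Fin k → ℕ → ℝ, IsTuple n k y s →
    unionLen f n k s ≤ unionLen f n k t

/-- `τ` (jump times valued in `EReal`, where `⊤` means the path never makes that jump)
is a semi-infinite disjoint optimizer from `(0,n)^k` to `(∞,1)^k`: it is the jump-time limit
of a sequence of disjoint optimizers from `(0,n)^k` to `(ℓ m,1)^k` with `ℓ m → ∞`. -/
def IsInfOpt (f : ℕ → ℝ → ℝ) (n k : ℕ) (τ : Fin k → ℕ → EReal) : Prop :=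
  ∃ (ℓ : ℕ → ℝ) (t : ℕ → Fin k → ℕ → ℝ),
    Filter.Tendsto ℓ Filter.atTop Filter.atTop ∧
    (∀ m, IsOpt f n k (ℓ m) (t m)) ∧
    (∀ (j : Fin k) (i : ℕ), i ≤ n →
      Filter.Tendsto (fun m => ((t m j i : ℝ) : EReal)) Filter.atTop (nhds (τ j i)))

/-- Jump times of the `k` lowest constant paths: path `j` (0-indexed) follows line
`n - k + 1 + j` forever. -/
noncomputable def constTup (n k : ℕ) : Fin k → ℕ → EReal :=
  fun j i => if n - k + 1 + j.val ≤ i then (0 : EReal) else ⊤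

section CadlagFacts
variable {f : ℝ → ℝ}

lemma lml_of_pos (f : ℝ → ℝ) {z : ℝ} (hz : 0 < z) : lml f z = Function.leftLim f z := by
  simp [lml, not_le.2 hz]

lemma lml_of_nonpos (f : ℝ → ℝ) {z : ℝ} (hz : z ≤ 0) : lml f z = 0 := by simp [lml, hz]

lemma cadlag_tendsto_leftLim (hf : Cadlag f) {x : ℝ} (hx : 0 < x) :
    Tendsto f (nhdsWithin x (Set.Iio x)) (nhds (Function.leftLim f x)) := by
  obtain ⟨l, hl⟩ := hf.2 x hx
  rwa [leftLim_eq_of_tendsto hl]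

/-- quantitative right continuity -/
lemma cadlag_right (hf : Cadlag f) {x : ℝ} (hx : 0 ≤ x) {ε : ℝ} (hε : 0 < ε) :
    ∃ δ > 0, ∀ z, x ≤ z → z < x + δ → |f z - f x| < ε := by
  have h := hf.1 x hx
  rw [ContinuousWithinAt, Metric.tendsto_nhdsWithin_nhds] at h
  obtain ⟨δ, hδ, hd⟩ := h ε hε
  refine ⟨δ, hδ, fun z hz1 hz2 => ?_⟩
  have := hd (x := z) hz1 (by rw [Real.dist_eq]; rw [abs_lt]; constructor <;> linarith)
  rwa [Real.dist_eq] at this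

/-- quantitative left limit -/
lemma cadlag_left (hf : Cadlag f) {x : ℝ} (hx : 0 < x) {ε : ℝ} (hε : 0 < ε) :
    ∃ δ > 0, ∀ z, x - δ < z → z < x → |f z - Function.leftLim f x| < ε := by
  have h := cadlag_tendsto_leftLim hf hx
  rw [Metric.tendsto_nhdsWithin_nhds] at h
  obtain ⟨δ, hδ, hd⟩ := h ε hε
  refine ⟨δ, hδ, fun z hz1 hz2 => ?_⟩
  have := hd (x := z) hz2 (by rw [Real.dist_eq]; rw [abs_lt]; constructor <;> linarith)
  rwa [Real.dist_eq] at this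

/-- `lml f z ≥ f x - ε` for `z` slightly to the right of `x`. -/
lemma lml_ge_right (hf : Cadlag f) {x : ℝ} (hx : 0 ≤ x) {ε : ℝ} (hε : 0 < ε) :
    ∃ δ > 0, ∀ z, x < z → z < x + δ → f x - ε ≤ lml f z := by
  obtain ⟨δ, hδ, hd⟩ := cadlag_right hf hx hε
  refine ⟨δ, hδ, fun z hz1 hz2 => ?_⟩
  have hz0 : 0 < z := lt_of_le_of_lt hx hz1
  rw [lml_of_pos f hz0]
  refine ge_of_tendsto (cadlag_tendsto_leftLim hf hz0) ?_
  filter_upwards [Ioo_mem_nhdsLT hz1] with w hw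
  have := hd w (le_of_lt hw.1) (lt_trans hw.2 hz2)
  have := abs_lt.1 this
  linarith

/-- `f` is usc at every `x ≥ 0` (through nonneg arguments). -/
lemma f_usc (hf : Cadlag f) (hj : NonnegJumps f) {x : ℝ} (hx : 0 ≤ x) {ε : ℝ} (hε : 0 < ε) :
    ∃ δ > 0, ∀ z, 0 ≤ z → |z - x| < δ → f z ≤ f x + ε := by
  obtain ⟨δr, hδr, hdr⟩ := cadlag_right hf hx hε
  rcases eq_or_lt_of_le hx with hx0 | hxpos
  · refine ⟨δr, hδr, fun z hz1 hz2 => ?_⟩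
    have hzx : x ≤ z := le_trans (le_of_eq hx0.symm) hz1
    have := abs_lt.1 hz2
    have := abs_lt.1 (hdr z hzx (by linarith))
    linarith
  · obtain ⟨δl, hδl, hdl⟩ := cadlag_left hf hxpos hε
    refine ⟨min δr δl, lt_min hδr hδl, fun z hz1 hz2 => ?_⟩
    have h2 := abs_lt.1 hz2
    rcases le_or_gt x z with hzx | hzx
    · have := abs_lt.1 (hdr z hzx (by have := min_le_left δr δl; linarith))
      linarith
    · have := abs_lt.1 (hdl z (by have := min_le_right δr δl; linarith) hzx)
      have hLle : Function.leftLim f x ≤ f x := by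
        have := hj x hx; rwa [lml_of_pos f hxpos] at this
      linarith

/-- `lml f` is lsc at every `x ≥ 0` (through nonneg arguments). -/
lemma lml_lsc (hf : Cadlag f) (hj : NonnegJumps f) {x : ℝ} (hx : 0 ≤ x) {ε : ℝ} (hε : 0 < ε) :
    ∃ δ > 0, ∀ z, 0 ≤ z → |z - x| < δ → lml f x - ε ≤ lml f z := by
  obtain ⟨δC, hδC, hdC⟩ := lml_ge_right hf hx hε
  rcases eq_or_lt_of_le hx with hx0 | hxpos
  · subst hx0
    refine ⟨δC, hδC, fun z hz1 hz2 => ?_⟩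
    have h2 := abs_lt.1 hz2
    rcases eq_or_lt_of_le hz1 with hz0 | hz0
    · rw [lml_of_nonpos f (le_of_eq hz0.symm), lml_of_nonpos f le_rfl]; linarith
    · have hf0 : 0 ≤ f 0 := by
        have := hj 0 le_rfl; rwa [lml_of_nonpos f le_rfl] at this
      have := hdC z hz0 (by linarith)
      rw [lml_of_nonpos f le_rfl]
      linarith
  · obtain ⟨δl, hδl, hdl⟩ := cadlag_left hf hxpos hε
    refine ⟨min (min δC δl) x, lt_min (lt_min hδC hδl) hxpos, fun z hz1 hz2 => ?_⟩
    have h2 := abs_lt.1 hz2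
    have hm1 : min (min δC δl) x ≤ δC := le_trans (min_le_left _ _) (min_le_left _ _)
    have hm2 : min (min δC δl) x ≤ δl := le_trans (min_le_left _ _) (min_le_right _ _)
    have hm3 : min (min δC δl) x ≤ x := min_le_right _ _
    have hzpos : 0 < z := by linarith
    rcases lt_trichotomy z x with hzx | hzx | hzx
    · -- z < x : use left limit control
      rw [lml_of_pos f hzpos, lml_of_pos f hxpos]
      refine ge_of_tendsto (cadlag_tendsto_leftLim hf hzpos) ?_
      filter_upwards [Ioo_mem_nhdsLT (show x - δl < z by linarith)] with w hw
      have := abs_lt.1 (hdl w hw.1 (lt_trans hw.2 hzx))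
      linarith
    · rw [hzx]; linarith
    · have := hdC z hzx (by linarith)
      have hLle : lml f x ≤ f x := hj x hx
      linarith

end CadlagFacts

/-- The "joint" increment across a gap `[b,a]` (right end of one interval, left end of next). -/
noncomputable def chi (f : ℝ → ℝ) (b a : ℝ) : ℝ :=
  f b - lml f a - (if b = a then f b - lml f b else 0)

section Chi
variable {f : ℝ → ℝ}

lemma chi_of_lt {b a : ℝ} (h : b < a) : chi f b a = f b - lml f a := by
  simp [chi, ne_of_lt h]

lemma chi_of_eq {b a : ℝ} (h : b = a) : chi f b a = 0 := by
  subst h; simp [chi]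

/-- `chi` is usc on `{0 ≤ b ≤ a}`. -/
lemma chi_usc (hf : Cadlag f) (hj : NonnegJumps f) {β α : ℝ} (hβ : 0 ≤ β) (hβα : β ≤ α)
    {ε : ℝ} (hε : 0 < ε) :
    ∃ δ > 0, ∀ b a, 0 ≤ b → b ≤ a → |b - β| < δ → |a - α| < δ →
      chi f b a ≤ chi f β α + ε := by
  have hε2 : 0 < ε / 2 := by linarith
  rcases eq_or_lt_of_le hβα with heq | hlt
  · -- diagonal case: β = α =: x
    subst heq
    obtain ⟨δr, hδr, hdr⟩ := cadlag_right hf hβ hε2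
    obtain ⟨δC, hδC, hdC⟩ := lml_ge_right hf hβ hε2
    rcases eq_or_lt_of_le hβ with hx0 | hxpos
    · subst hx0
      refine ⟨min δr δC, lt_min hδr hδC, fun b a hb hba h1 h2 => ?_⟩
      rcases eq_or_lt_of_le hba with hba' | hba'
      · rw [chi_of_eq hba', chi_of_eq rfl]; linarith
      · have h1' := abs_lt.1 h1
        have h2' := abs_lt.1 h2
        have hm1 : min δr δC ≤ δr := min_le_left _ _
        have hm2 : min δr δC ≤ δC := min_le_right _ _
        rw [chi_of_lt hba', chi_of_eq rfl]
        have e1 := abs_lt.1 (hdr b hb (by linarith))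
        have e2 := hdC a (by linarith) (by linarith)
        linarith
    · obtain ⟨δl, hδl, hdl⟩ := cadlag_left hf hxpos hε2
      obtain ⟨δB, hδB, hdB⟩ := lml_lsc hf hj hβ hε2
      refine ⟨min (min δr δC) (min δl δB), lt_min (lt_min hδr hδC) (lt_min hδl hδB), fun b a hb hba h1 h2 => ?_⟩
      have h1' := abs_lt.1 h1
      have h2' := abs_lt.1 h2
      have hm1 : min (min δr δC) (min δl δB) ≤ δr := le_trans (min_le_left _ _) (min_le_left _ _)
      have hm2 : min (min δr δC) (min δl δB) ≤ δC := le_trans (min_le_left _ _) (min_le_right _ _)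
      have hm3 : min (min δr δC) (min δl δB) ≤ δl := le_trans (min_le_right _ _) (min_le_left _ _)
      have hm4 : min (min δr δC) (min δl δB) ≤ δB := le_trans (min_le_right _ _) (min_le_right _ _)
      rcases eq_or_lt_of_le hba with hba' | hba'
      · rw [chi_of_eq hba', chi_of_eq rfl]; linarith
      · rw [chi_of_lt hba', chi_of_eq rfl]
        have hL : Function.leftLim f β ≤ f β := by
          have := hj β hβ; rwa [lml_of_pos f hxpos] at this
        rcases lt_or_ge b β with hbx | hbx
        · -- b < x : f b ≤ L + ε/2, lml f a ≥ L - ε/2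
          have e1 := abs_lt.1 (hdl b (by linarith) hbx)
          have e2 := hdB a (by linarith) (by rw [abs_lt]; constructor <;> linarith)
          rw [lml_of_pos f hxpos] at e2
          linarith
        · -- x ≤ b < a
          have e1 := abs_lt.1 (hdr b hbx (by linarith))
          have e2 := hdC a (by linarith) (by linarith)
          linarith
  · -- off-diagonal: β < α
    obtain ⟨δA, hδA, hdA⟩ := f_usc hf hj hβ hε2
    obtain ⟨δB, hδB, hdB⟩ := lml_lsc hf hj (le_trans hβ hβα) hε2
    refine ⟨min (min δA δB) ((α - β)/2), lt_min (lt_min hδA hδB) (by linarith), fun b a hb hba h1 h2 => ?_⟩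
    have h1' := abs_lt.1 h1
    have h2' := abs_lt.1 h2
    have hm1 : min (min δA δB) ((α - β)/2) ≤ δA := le_trans (min_le_left _ _) (min_le_left _ _)
    have hm2 : min (min δA δB) ((α - β)/2) ≤ δB := le_trans (min_le_left _ _) (min_le_right _ _)
    have hm3 : min (min δA δB) ((α - β)/2) ≤ (α - β)/2 := min_le_right _ _
    have hba' : b < a := by linarith
    rw [chi_of_lt hba', chi_of_lt hlt]
    have e1 := hdA b hb (by rw [abs_lt]; constructor <;> linarith)
    have e2 := hdB a (by linarith) (by rw [abs_lt]; constructor <;> linarith)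
    linarith

end Chi

section Bdd
variable {f : ℝ → ℝ}

lemma cadlag_bdd (hf : Cadlag f) (y : ℝ) :
    ∃ M : ℝ, 0 ≤ M ∧ (∀ z, 0 ≤ z → z ≤ y → |f z| ≤ M) ∧
      (∀ z, 0 ≤ z → z ≤ y → |lml f z| ≤ M) := by
  have key : ∀ x : ℝ, ∃ δ > 0, ∃ B, ∀ z, 0 ≤ z → |z - x| < δ → |f z| ≤ B := by
    intro x
    rcases lt_or_ge x 0 with hx | hx
    · exact ⟨-x, by linarith, 0, fun z hz hd => by
        exfalso; have := abs_lt.1 hd; linarith⟩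
    · obtain ⟨δr, hδr, hdr⟩ := cadlag_right hf hx one_pos
      rcases eq_or_lt_of_le hx with hx0 | hxpos
      · refine ⟨δr, hδr, |f x| + 1, fun z hz hd => ?_⟩
        have hd' := abs_lt.1 hd
        have hzx : x ≤ z := by rw [← hx0]; exact hz
        have := abs_lt.1 (hdr z hzx (by linarith))
        have h1 := neg_abs_le (f x); have h2 := le_abs_self (f x)
        rw [abs_le]; constructor <;> linarith
      · obtain ⟨δl, hδl, hdl⟩ := cadlag_left hf hxpos one_pos
        refine ⟨min δr δl, lt_min hδr hδl, |f x| + |Function.leftLim f x| + 1,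
          fun z hz hd => ?_⟩
        have hd' := abs_lt.1 hd
        have hm1 : min δr δl ≤ δr := min_le_left _ _
        have hm2 : min δr δl ≤ δl := min_le_right _ _
        have h1 := neg_abs_le (f x); have h2 := le_abs_self (f x)
        have h3 := neg_abs_le (Function.leftLim f x)
        have h4 := le_abs_self (Function.leftLim f x)
        have h5 := abs_nonneg (f x); have h6 := abs_nonneg (Function.leftLim f x)
        rcases le_or_gt x z with hzx | hzx
        · have := abs_lt.1 (hdr z hzx (by linarith))
          rw [abs_le]; constructor <;> linarith
        · have := abs_lt.1 (hdl z (by linarith) hzx)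
          rw [abs_le]; constructor <;> linarith
  choose δ hδ B hB using key
  have hcov : Icc (0:ℝ) y ⊆ ⋃ x : ℝ, Ioo (x - δ x) (x + δ x) := by
    intro z _
    exact mem_iUnion.2 ⟨z, by constructor <;> [skip; skip] <;> simp <;> linarith [hδ z]⟩
  obtain ⟨t, ht⟩ := (isCompact_Icc (a := (0:ℝ)) (b := y)).elim_finite_subcover
    (fun x => Ioo (x - δ x) (x + δ x)) (fun x => isOpen_Ioo) hcov
  set M : ℝ := ∑ x ∈ t, |B x| with hM
  have hM0 : 0 ≤ M := Finset.sum_nonneg fun x _ => abs_nonneg _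
  have hfb : ∀ z, 0 ≤ z → z ≤ y → |f z| ≤ M := by
    intro z hz0 hzy
    have := ht ⟨hz0, hzy⟩
    rw [mem_iUnion₂] at this
    obtain ⟨x, hxt, hzx⟩ := this
    have h1 : |f z| ≤ B x := hB x z hz0 (by rw [abs_lt]; constructor <;> [linarith [hzx.1]; linarith [hzx.2]])
    have h2 : |B x| ≤ M := Finset.single_le_sum (fun x _ => abs_nonneg (B x)) hxt
    exact le_trans h1 (le_trans (le_abs_self _) h2)
  refine ⟨M, hM0, hfb, fun z hz0 hzy => ?_⟩
  rcases eq_or_lt_of_le hz0 with hz0' | hzpos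
  · rw [lml_of_nonpos f (le_of_eq hz0'.symm)]; simpa using hM0
  · rw [lml_of_pos f hzpos, abs_le]
    have htd := cadlag_tendsto_leftLim hf hzpos
    constructor
    · refine ge_of_tendsto htd ?_
      filter_upwards [Ioo_mem_nhdsLT hzpos] with w hw
      have := hfb w hw.1.le (le_trans hw.2.le hzy)
      linarith [neg_abs_le (f w)]
    · refine le_of_tendsto htd ?_
      filter_upwards [Ioo_mem_nhdsLT hzpos] with w hw
      have := hfb w hw.1.le (le_trans hw.2.le hzy)
      linarith [le_abs_self (f w)]

end Bdd

section Tuples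
variable {n k : ℕ} {y : ℝ} {t : Fin k → ℕ → ℝ}

lemma tuple_anti (ht : IsTuple n k y t) (j : Fin k) {i i' : ℕ} (h : i ≤ i') (h' : i' ≤ n) :
    t j i' ≤ t j i := by
  induction i', h using Nat.le_induction with
  | base => exact le_refl _
  | succ m hm ih =>
    exact le_trans (ht.2.2.1 j m (by omega)) (ih (by omega))

lemma tuple_nonneg (ht : IsTuple n k y t) (j : Fin k) {i : ℕ} (h : i ≤ n) : 0 ≤ t j i := by
  have := tuple_anti ht j h le_rfl
  rw [ht.1 j] at this; exact this

lemma tuple_le_y (ht : IsTuple n k y t) (j : Fin k) {i : ℕ} (h : i ≤ n) : t j i ≤ y := by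
  have := tuple_anti ht j (Nat.zero_le i) h
  rwa [ht.2.1 j] at this

end Tuples

/-- Safe (`ℕ`-indexed) accessor for a tuple. -/
noncomputable def tt {k : ℕ} (t : Fin k → ℕ → ℝ) (j i : ℕ) : ℝ :=
  if h : j < k then t ⟨j, h⟩ i else 0

lemma tt_eq {k : ℕ} (t : Fin k → ℕ → ℝ) (j : Fin k) (i : ℕ) : tt t j.val i = t j i := by
  simp [tt, j.isLt]

/-- Per-line value of the union length, in "chi" form. -/
noncomputable def lineVal (f : ℝ → ℝ) (k : ℕ) (t : Fin k → ℕ → ℝ) (i : ℕ) : ℝ :=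
  - lml f (tt t 0 i) + f (tt t (k-1) (i-1))
    + ∑ j ∈ Finset.range (k-1), chi f (tt t j (i-1)) (tt t (j+1) i)

lemma line_rewrite (f : ℝ → ℝ) (T : ℕ → ℕ → ℝ) (K : ℕ) (i : ℕ) :
    (∑ j ∈ Finset.range (K+1), (f (T j (i-1)) - lml f (T j i)))
      - ∑ j ∈ Finset.range (K+1), (if j + 1 < K + 1 then
          (if T j (i-1) = T (j+1) i then f (T j (i-1)) - lml f (T j (i-1)) else 0) else 0)
    = - lml f (T 0 i) + f (T K (i-1))
      + ∑ j ∈ Finset.range K, chi f (T j (i-1)) (T (j+1) i) := by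
  rw [Finset.sum_sub_distrib, Finset.sum_range_succ (fun j => f (T j (i-1))),
    Finset.sum_range_succ' (fun j => lml f (T j i))]
  have h2 : ∑ j ∈ Finset.range (K+1), (if j + 1 < K + 1 then
      (if T j (i-1) = T (j+1) i then f (T j (i-1)) - lml f (T j (i-1)) else 0) else 0)
      = ∑ j ∈ Finset.range K, (if T j (i-1) = T (j+1) i then
          f (T j (i-1)) - lml f (T j (i-1)) else 0) := by
    rw [Finset.sum_range_succ]
    simp only [lt_irrefl, if_false, add_zero]
    refine Finset.sum_congr rfl fun j hj => ?_
    rw [if_pos (by simpa using Finset.mem_range.1 hj)]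
  rw [h2]
  have h3 : ∑ j ∈ Finset.range K, chi f (T j (i-1)) (T (j+1) i)
      = (∑ j ∈ Finset.range K, (f (T j (i-1)) - lml f (T (j+1) i)))
        - ∑ j ∈ Finset.range K, (if T j (i-1) = T (j+1) i then
            f (T j (i-1)) - lml f (T j (i-1)) else 0) := by
    rw [← Finset.sum_sub_distrib]
    exact Finset.sum_congr rfl fun j hj => by rw [chi]
  rw [h3, Finset.sum_sub_distrib]
  ring

lemma unionLen_eq (f : ℕ → ℝ → ℝ) (n k : ℕ) (hk : 1 ≤ k) (t : Fin k → ℕ → ℝ) :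
    unionLen f n k t = ∑ i ∈ Finset.Icc 1 n, lineVal (f i) k t i := by
  refine Finset.sum_congr rfl fun i _ => ?_
  have e1 : (∑ j : Fin k, (f i (t j (i - 1)) - lml (f i) (t j i)))
      = ∑ j ∈ Finset.range k, (f i (tt t j (i-1)) - lml (f i) (tt t j i)) := by
    rw [← Fin.sum_univ_eq_sum_range]
    exact Finset.sum_congr rfl fun j _ => by rw [tt_eq, tt_eq]
  have e2 : (∑ j : Fin k, (if hj : j.val + 1 < k then
          (if t j (i - 1) = t ⟨j.val + 1, hj⟩ i then
            f i (t j (i - 1)) - lml (f i) (t j (i - 1)) else 0)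
        else 0))
      = ∑ j ∈ Finset.range k, (if j + 1 < k then
          (if tt t j (i-1) = tt t (j+1) i then
            f i (tt t j (i-1)) - lml (f i) (tt t j (i-1)) else 0) else 0) := by
    rw [← Fin.sum_univ_eq_sum_range]
    refine Finset.sum_congr rfl fun j _ => ?_
    by_cases hj : j.val + 1 < k
    · rw [dif_pos hj, if_pos hj, tt_eq]
      have : tt t (j.val + 1) i = t ⟨j.val + 1, hj⟩ i := by simp [tt, hj]
      rw [this]
    · rw [dif_neg hj, if_neg hj]
  rw [e1, e2]
  obtain ⟨K, rfl⟩ : ∃ K, k = K + 1 := ⟨k - 1, by omega⟩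
  have := line_rewrite (f i) (tt t) K i
  rw [this]
  simp [lineVal]

/-- The staircase tuple : path `j` jumps to the bottom at time `0` except on the top `j` lines. -/
noncomputable def baseTup (k : ℕ) (y : ℝ) : Fin k → ℕ → ℝ :=
  fun j i => if i ≤ j.val then y else 0

lemma baseTup_isTuple {n k : ℕ} (hk : 1 ≤ k) (hkn : k ≤ n) {y : ℝ} (hy : 0 ≤ y) :
    IsTuple n k y (baseTup k y) := by
  refine ⟨fun j => ?_, fun j => ?_, fun j i hi => ?_, fun j hj i hi => ?_⟩
  · have : ¬ (n ≤ j.val) := by have := j.isLt; omega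
    simp [baseTup, this]
  · simp [baseTup]
  · by_cases h : i + 1 ≤ j.val
    · rw [baseTup, if_pos h, baseTup, if_pos (by omega)]
    · rw [baseTup, if_neg h]
      by_cases h' : i ≤ j.val <;> simp [baseTup, h', hy]
  · by_cases h : i ≤ j.val
    · rw [baseTup, if_pos h, baseTup, if_pos (by simp; omega)]
    · rw [baseTup, if_neg h]
      by_cases h' : i + 1 ≤ j.val + 1 <;> simp [baseTup, h', hy]

lemma eventually_sum_le {ι : Type*} (S : Finset ι) (g : ι → ℕ → ℝ) (h : ι → ℝ) {ε : ℝ}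
    (H : ∀ x ∈ S, ∀ᶠ m in atTop, g x m ≤ h x + ε) :
    ∀ᶠ m in atTop, ∑ x ∈ S, g x m ≤ ∑ x ∈ S, h x + S.card * ε := by
  filter_upwards [(Filter.eventually_all_finset S).2 H] with m hm
  calc ∑ x ∈ S, g x m ≤ ∑ x ∈ S, (h x + ε) := Finset.sum_le_sum hm
  _ = ∑ x ∈ S, h x + S.card * ε := by rw [Finset.sum_add_distrib, Finset.sum_const,
      nsmul_eq_mul]

lemma eventually_abs_lt {u : ℕ → ℝ} {x : ℝ} (hu : Tendsto u atTop (nhds x)) {δ : ℝ}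
    (hδ : 0 < δ) : ∀ᶠ m in atTop, |u m - x| < δ := by
  have := Metric.tendsto_nhds.1 hu δ hδ
  filter_upwards [this] with m hm
  rwa [Real.dist_eq] at hm

lemma tt_eq' {k : ℕ} (t : Fin k → ℕ → ℝ) {j : ℕ} (h : j < k) (i : ℕ) :
    tt t j i = t ⟨j, h⟩ i := by simp [tt, h]

lemma unionLen_usc (f : ℕ → ℝ → ℝ) {n k : ℕ} (hk : 1 ≤ k)
    (hcad : ∀ i : ℕ, 1 ≤ i → i ≤ n → Cadlag (f i))
    (hjmp : ∀ i : ℕ, 1 ≤ i → i ≤ n → NonnegJumps (f i))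
    {y : ℝ} {u : ℕ → Fin k → ℕ → ℝ} (hu : ∀ m, IsTuple n k y (u m))
    {t : Fin k → ℕ → ℝ} (ht : IsTuple n k y t)
    (hconv : ∀ (j : Fin k) (i : ℕ), i ≤ n → Tendsto (fun m => u m j i) atTop (nhds (t j i)))
    {ε : ℝ} (hε : 0 < ε) :
    ∀ᶠ m in atTop, unionLen f n k (u m) ≤ unionLen f n k t + ε := by
  have hε' : 0 < ε / (n + 1) := by positivity
  have key : ∀ i ∈ Finset.Icc 1 n, ∀ᶠ m in atTop,
      lineVal (f i) k (u m) i ≤ lineVal (f i) k t i + ε / (n+1) := by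
    intro i hi
    obtain ⟨hi1, hi2⟩ := Finset.mem_Icc.1 hi
    have hcadi := hcad i hi1 hi2
    have hjmpi := hjmp i hi1 hi2
    have hi1n : i - 1 ≤ n := by omega
    set ε2 := ε / (n+1) / (k+2) with hε2def
    have hε2 : 0 < ε2 := by positivity
    have h0k : 0 < k := hk
    have hk1k : k - 1 < k := by omega
    -- E1
    have E1 : ∀ᶠ m in atTop,
        - lml (f i) (tt (u m) 0 i) ≤ - lml (f i) (tt t 0 i) + ε2 := by
      rw [tt_eq' t h0k i]
      obtain ⟨δ, hδ, hd⟩ := lml_lsc hcadi hjmpi (tuple_nonneg ht ⟨0, h0k⟩ hi2) hε2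
      filter_upwards [eventually_abs_lt (hconv ⟨0, h0k⟩ i hi2) hδ] with m hm
      rw [tt_eq' (u m) h0k i]
      have := hd (u m ⟨0, h0k⟩ i) (tuple_nonneg (hu m) ⟨0, h0k⟩ hi2) hm
      linarith
    -- E2
    have E2 : ∀ᶠ m in atTop,
        f i (tt (u m) (k-1) (i-1)) ≤ f i (tt t (k-1) (i-1)) + ε2 := by
      rw [tt_eq' t hk1k (i-1)]
      obtain ⟨δ, hδ, hd⟩ := f_usc hcadi hjmpi (tuple_nonneg ht ⟨k-1, hk1k⟩ hi1n) hε2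
      filter_upwards [eventually_abs_lt (hconv ⟨k-1, hk1k⟩ (i-1) hi1n) hδ] with m hm
      rw [tt_eq' (u m) hk1k (i-1)]
      exact hd (u m ⟨k-1, hk1k⟩ (i-1)) (tuple_nonneg (hu m) ⟨k-1, hk1k⟩ hi1n) hm
    -- E3
    have E3 : ∀ᶠ m in atTop,
        ∑ j ∈ Finset.range (k-1), chi (f i) (tt (u m) j (i-1)) (tt (u m) (j+1) i)
          ≤ ∑ j ∈ Finset.range (k-1), chi (f i) (tt t j (i-1)) (tt t (j+1) i)
            + (k-1 : ℕ) * ε2 := by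
      have := eventually_sum_le (Finset.range (k-1))
        (fun j m => chi (f i) (tt (u m) j (i-1)) (tt (u m) (j+1) i))
        (fun j => chi (f i) (tt t j (i-1)) (tt t (j+1) i)) (ε := ε2) ?_
      · simpa using this
      intro j hj
      show ∀ᶠ m in atTop, chi (f i) (tt (u m) j (i-1)) (tt (u m) (j+1) i)
        ≤ chi (f i) (tt t j (i-1)) (tt t (j+1) i) + ε2
      have hjk : j < k := by have := Finset.mem_range.1 hj; omega
      have hjk1 : j + 1 < k := by have := Finset.mem_range.1 hj; omega
      rw [tt_eq' t hjk (i-1), tt_eq' t hjk1 i]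
      have hβ : 0 ≤ t ⟨j, hjk⟩ (i-1) := tuple_nonneg ht ⟨j, hjk⟩ hi1n
      have hβα : t ⟨j, hjk⟩ (i-1) ≤ t ⟨j+1, hjk1⟩ i := by
        have := ht.2.2.2 ⟨j, hjk⟩ hjk1 (i-1) (by omega)
        have e : i - 1 + 1 = i := by omega
        rwa [e] at this
      obtain ⟨δ, hδ, hd⟩ := chi_usc hcadi hjmpi hβ hβα hε2
      filter_upwards [eventually_abs_lt (hconv ⟨j, hjk⟩ (i-1) hi1n) hδ,
        eventually_abs_lt (hconv ⟨j+1, hjk1⟩ i hi2) hδ] with m hm1 hm2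
      rw [tt_eq' (u m) hjk (i-1), tt_eq' (u m) hjk1 i]
      refine hd _ _ (tuple_nonneg (hu m) ⟨j, hjk⟩ hi1n) ?_ hm1 hm2
      have := (hu m).2.2.2 ⟨j, hjk⟩ hjk1 (i-1) (by omega)
      have e : i - 1 + 1 = i := by omega
      rwa [e] at this
    filter_upwards [E1, E2, E3] with m h1 h2 h3
    rw [lineVal, lineVal]
    have hcard : ((k-1 : ℕ) : ℝ) * ε2 + ε2 + ε2 ≤ ε / (n+1) := by
      have : ((k-1 : ℕ) : ℝ) ≤ k := by exact_mod_cast Nat.sub_le k 1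
      have h2' : ((k-1:ℕ):ℝ) * ε2 + ε2 + ε2 ≤ (k+2) * ε2 := by nlinarith
      rw [hε2def] at h2' ⊢
      calc ((k-1:ℕ):ℝ) * (ε/(n+1)/(k+2)) + ε/(n+1)/(k+2) + ε/(n+1)/(k+2)
          ≤ (k+2) * (ε/(n+1)/(k+2)) := h2'
        _ = ε / (n+1) := by field_simp
    linarith
  have := eventually_sum_le (Finset.Icc 1 n) (fun i m => lineVal (f i) k (u m) i)
    (fun i => lineVal (f i) k t i) key
  filter_upwards [this] with m hm
  rw [unionLen_eq f n k hk, unionLen_eq f n k hk]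
  have hcard : ((Finset.Icc 1 n).card : ℝ) * (ε / (n+1)) ≤ ε := by
    have h1 : ((Finset.Icc 1 n).card : ℝ) = n := by rw [Nat.card_Icc]; simp
    rw [h1]
    have h2 : (n:ℝ) ≤ (n:ℝ)+1 := by linarith
    calc (n:ℝ) * (ε/((n:ℝ)+1)) ≤ ((n:ℝ)+1) * (ε/((n:ℝ)+1)) :=
          mul_le_mul_of_nonneg_right h2 (by positivity)
      _ = ε := by field_simp
  linarith

lemma unionLen_bddAbove (f : ℕ → ℝ → ℝ) {n k : ℕ}
    (hcad : ∀ i : ℕ, 1 ≤ i → i ≤ n → Cadlag (f i))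
    (hjmp : ∀ i : ℕ, 1 ≤ i → i ≤ n → NonnegJumps (f i)) (y : ℝ) :
    ∃ C : ℝ, ∀ t : Fin k → ℕ → ℝ, IsTuple n k y t → unionLen f n k t ≤ C := by
  have key : ∀ i : ℕ, ∃ M : ℝ, 0 ≤ M ∧ (1 ≤ i → i ≤ n →
      ((∀ z, 0 ≤ z → z ≤ y → |f i z| ≤ M) ∧ (∀ z, 0 ≤ z → z ≤ y → |lml (f i) z| ≤ M))) := by
    intro i
    by_cases h : 1 ≤ i ∧ i ≤ n
    · obtain ⟨M, hM0, h1, h2⟩ := cadlag_bdd (hcad i h.1 h.2) y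
      exact ⟨M, hM0, fun _ _ => ⟨h1, h2⟩⟩
    · exact ⟨0, le_refl _, fun h1 h2 => absurd ⟨h1, h2⟩ h⟩
  choose M hM0 hM using key
  refine ⟨∑ i ∈ Finset.Icc 1 n, (2 * k * M i), fun t ht => ?_⟩
  rw [unionLen]
  refine Finset.sum_le_sum fun i hi => ?_
  obtain ⟨hi1, hi2⟩ := Finset.mem_Icc.1 hi
  obtain ⟨hMf, hMl⟩ := hM i hi1 hi2
  have hcor : (0:ℝ) ≤ ∑ j : Fin k, (if hj : j.val + 1 < k then
      (if t j (i - 1) = t ⟨j.val + 1, hj⟩ i then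
        f i (t j (i - 1)) - lml (f i) (t j (i - 1)) else 0) else 0) := by
    refine Finset.sum_nonneg fun j _ => ?_
    by_cases hj : j.val + 1 < k
    · rw [dif_pos hj]
      by_cases hc : t j (i - 1) = t ⟨j.val + 1, hj⟩ i
      · rw [if_pos hc]
        have h0 := tuple_nonneg ht j (show i - 1 ≤ n by omega)
        have := hjmp i hi1 hi2 (t j (i-1)) h0
        linarith
      · rw [if_neg hc]
    · rw [dif_neg hj]
  have hraw : (∑ j : Fin k, (f i (t j (i - 1)) - lml (f i) (t j i))) ≤ 2 * k * M i := by
    calc (∑ j : Fin k, (f i (t j (i - 1)) - lml (f i) (t j i)))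
        ≤ ∑ _j : Fin k, (2 * M i) := by
          refine Finset.sum_le_sum fun j _ => ?_
          have h1 := hMf (t j (i-1)) (tuple_nonneg ht j (by omega)) (tuple_le_y ht j (by omega))
          have h2 := hMl (t j i) (tuple_nonneg ht j hi2) (tuple_le_y ht j hi2)
          have := abs_le.1 h1; have := abs_le.1 h2
          linarith [(abs_le.1 h1).2, (abs_le.1 h2).1]
      _ = 2 * k * M i := by
          rw [Finset.sum_const, Finset.card_univ, Fintype.card_fin, nsmul_eq_mul]; ring
  linarith

lemma exists_opt (f : ℕ → ℝ → ℝ) {n k : ℕ} (hn : 1 ≤ n) (hk : 1 ≤ k) (hkn : k ≤ n)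
    (hcad : ∀ i : ℕ, 1 ≤ i → i ≤ n → Cadlag (f i))
    (hjmp : ∀ i : ℕ, 1 ≤ i → i ≤ n → NonnegJumps (f i))
    {y : ℝ} (hy : 0 ≤ y) : ∃ t : Fin k → ℕ → ℝ, IsOpt f n k y t := by
  classical
  set A : Set ℝ := (fun t => unionLen f n k t) '' {t : Fin k → ℕ → ℝ | IsTuple n k y t} with hA
  have hAne : A.Nonempty := ⟨unionLen f n k (baseTup k y),
    ⟨baseTup k y, baseTup_isTuple hk hkn hy, rfl⟩⟩
  obtain ⟨C, hC⟩ := unionLen_bddAbove f hcad hjmp (k := k) y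
  have hAbdd : BddAbove A := ⟨C, fun x ⟨t, ht, hxt⟩ => hxt ▸ hC t ht⟩
  set V := sSup A with hV
  -- maximizing sequence
  have hseq : ∀ m : ℕ, ∃ t : Fin k → ℕ → ℝ, IsTuple n k y t ∧
      V - 1/(m+1) < unionLen f n k t := by
    intro m
    have : V - 1/(m+1) < V := by
      have : (0:ℝ) < 1/(m+1) := by positivity
      linarith
    obtain ⟨x, hxA, hx⟩ := exists_lt_of_lt_csSup hAne this
    obtain ⟨t, ht, rfl⟩ := hxA
    exact ⟨t, ht, hx⟩
  choose s hs1 hs2 using hseq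
  -- compactness extraction
  set P := Fin k × Fin (n+1)
  set KS : Set (P → ℝ) := Set.pi Set.univ (fun _ => Icc (0:ℝ) y) with hKS
  have hKSc : IsCompact KS := isCompact_univ_pi (fun _ => isCompact_Icc)
  set uu : ℕ → P → ℝ := fun m p => s m p.1 p.2.val with huu
  have humem : ∀ m, uu m ∈ KS := by
    intro m
    rw [hKS, Set.mem_pi]
    intro p _
    exact ⟨tuple_nonneg (hs1 m) p.1 (by omega), tuple_le_y (hs1 m) p.1 (by omega)⟩
  obtain ⟨g, hgKS, φ, hφ, hgconv⟩ := hKSc.tendsto_subseq humem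
  set tstar : Fin k → ℕ → ℝ := fun j i => if h : i ≤ n then g (j, ⟨i, by omega⟩) else 0
    with htstar
  have hconv : ∀ (j : Fin k) (i : ℕ), i ≤ n →
      Tendsto (fun m => s (φ m) j i) atTop (nhds (tstar j i)) := by
    intro j i hi
    have := (tendsto_pi_nhds.1 hgconv) (j, ⟨i, by omega⟩)
    rw [htstar]
    simp only [dif_pos hi]
    convert this using 1
    rfl
  have htt : IsTuple n k y tstar := by
    refine ⟨fun j => ?_, fun j => ?_, fun j i hi => ?_, fun j hj i hi => ?_⟩
    · refine tendsto_nhds_unique (hconv j n le_rfl) ?_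
      have : (fun m => s (φ m) j n) = fun _ => (0:ℝ) := by
        funext m; exact (hs1 (φ m)).1 j
      rw [this]; exact tendsto_const_nhds
    · refine tendsto_nhds_unique (hconv j 0 (by omega)) ?_
      have : (fun m => s (φ m) j 0) = fun _ => y := by
        funext m; exact (hs1 (φ m)).2.1 j
      rw [this]; exact tendsto_const_nhds
    · exact le_of_tendsto_of_tendsto' (hconv j (i+1) (by omega)) (hconv j i (by omega))
        (fun m => (hs1 (φ m)).2.2.1 j i hi)
    · exact le_of_tendsto_of_tendsto' (hconv j i (by omega))
        (hconv ⟨j.val+1, hj⟩ (i+1) (by omega))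
        (fun m => (hs1 (φ m)).2.2.2 j hj i hi)
  refine ⟨tstar, htt, fun r hr => ?_⟩
  -- it suffices that `V ≤ unionLen tstar`
  have hVle : V ≤ unionLen f n k tstar := by
    by_contra hlt
    push_neg at hlt
    set ε := (V - unionLen f n k tstar) / 2 with hε
    have hε0 : 0 < ε := by rw [hε]; linarith
    have husc := unionLen_usc f hk hcad hjmp (fun m => hs1 (φ m)) htt hconv hε0
    -- also eventually `unionLen (s (φ m)) > V - ε`
    have h2 : ∀ᶠ m in atTop, V - 1/(m+1) ≤ unionLen f n k (s (φ m)) := by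
      filter_upwards [] with m
      calc V - 1/(m+1) ≤ V - 1/(φ m + 1) := by
            have h3' : m ≤ φ m := hφ.le_apply
            have h3 : (m:ℝ) + 1 ≤ (φ m : ℝ) + 1 := by
              have := (Nat.cast_le (α := ℝ)).2 h3'; linarith
            have h4 : (0:ℝ) < m + 1 := by positivity
            have h5 : (0:ℝ) < (φ m : ℝ) + 1 := by positivity
            have := one_div_le_one_div_of_le h4 h3
            linarith
        _ ≤ unionLen f n k (s (φ m)) := (hs2 (φ m)).le
    have h3 : ∀ᶠ m : ℕ in atTop, (1:ℝ)/((m:ℝ)+1) < ε := by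
      exact tendsto_one_div_add_atTop_nhds_zero_nat.eventually_lt_const hε0
    have := (husc.and (h2.and h3)).exists
    obtain ⟨m, hA1, hA2, hA3⟩ := this
    have : V < unionLen f n k tstar + 2 * ε := by linarith
    rw [hε] at this; linarith
  exact le_trans (le_csSup hAbdd ⟨r, hr, rfl⟩) hVle

lemma sum_sub_eq_sum_sub {ι : Type*} [DecidableEq ι] {S T : Finset ι} (hT : T ⊆ S)
    (g h : ι → ℝ) (heq : ∀ x ∈ S, x ∉ T → g x = h x) :
    ∑ x ∈ S, g x - ∑ x ∈ S, h x = ∑ x ∈ T, g x - ∑ x ∈ T, h x := by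
  rw [← Finset.sum_sdiff hT (f := g), ← Finset.sum_sdiff hT (f := h)]
  have he : ∑ x ∈ S \ T, g x = ∑ x ∈ S \ T, h x :=
    Finset.sum_congr rfl fun x hx =>
      heq x (Finset.mem_sdiff.1 hx).1 (Finset.mem_sdiff.1 hx).2
  rw [he]; ring

lemma sum_sub_single {k : ℕ} (j : Fin k) (g h : Fin k → ℝ)
    (heq : ∀ j', j' ≠ j → g j' = h j') :
    ∑ j', g j' - ∑ j', h j' = g j - h j := by
  rw [← Finset.sum_erase_add Finset.univ g (Finset.mem_univ j),
    ← Finset.sum_erase_add Finset.univ h (Finset.mem_univ j)]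
  have he : ∑ x ∈ Finset.univ.erase j, g x = ∑ x ∈ Finset.univ.erase j, h x :=
    Finset.sum_congr rfl fun x hx => heq x (Finset.ne_of_mem_erase hx)
  rw [he]; ring

/-- The exchange estimate: delaying the jump of path `j` from line `i+1` to line `i`
from time `t j i` to time `x` gains at least
`(f (i+1) x - f i x) + (lml (f i) (t j i) - f (i+1) (t j i))`. -/
lemma exchange (f : ℕ → ℝ → ℝ) {n k : ℕ} {y : ℝ} {t : Fin k → ℕ → ℝ}
    (ht : IsTuple n k y t)
    (hjmp : ∀ i' : ℕ, 1 ≤ i' → i' ≤ n → NonnegJumps (f i'))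
    (j : Fin k) {i : ℕ} (hi1 : 1 ≤ i) (hin : i + 1 ≤ n) {x : ℝ}
    (hax : t j i < x) (hxr : x < t j (i-1))
    (hdisj : ∀ hj : j.val + 1 < k, x < t ⟨j.val+1, hj⟩ (i+1)) :
    ∃ s : Fin k → ℕ → ℝ, IsTuple n k y s ∧
      unionLen f n k t + (f (i+1) x - f i x)
        + (lml (f i) (t j i) - f (i+1) (t j i)) ≤ unionLen f n k s := by
  classical
  have ha0 : 0 ≤ t j i := tuple_nonneg ht j (by omega)
  have hx0 : 0 ≤ x := le_of_lt (lt_of_le_of_lt ha0 hax)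
  set s : Fin k → ℕ → ℝ := fun j' i' => if j' = j ∧ i' = i then x else t j' i' with hs
  have hs_j : s j i = x := by simp [hs]
  have hs_ne : ∀ (j' : Fin k) (i' : ℕ), ¬ (j' = j ∧ i' = i) → s j' i' = t j' i' := by
    intro j' i' h; simp only [hs, if_neg h]
  have hs_nei : ∀ (j' : Fin k) (i' : ℕ), i' ≠ i → s j' i' = t j' i' := fun j' i' h =>
    hs_ne j' i' (by tauto)
  have hs_nej : ∀ (j' : Fin k) (i' : ℕ), j' ≠ j → s j' i' = t j' i' := fun j' i' h =>
    hs_ne j' i' (by tauto)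
  refine ⟨s, ?_, ?_⟩
  · refine ⟨fun j' => ?_, fun j' => ?_, fun j' i' hi' => ?_, fun j' hj' i' hi' => ?_⟩
    · rw [hs_nei j' n (by omega)]; exact ht.1 j'
    · rw [hs_nei j' 0 (by omega)]; exact ht.2.1 j'
    · by_cases hj' : j' = j
      · subst hj'
        by_cases h1 : i' = i
        · subst h1
          rw [hs_j, hs_nei j' (i'+1) (by omega)]
          exact le_of_lt (lt_of_le_of_lt (ht.2.2.1 j' i' hi') hax)
        · by_cases h2 : i' + 1 = i
          · rw [hs_nei j' i' h1]
            have e1 : s j' (i'+1) = x := by rw [h2, hs_j]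
            rw [e1]
            have e2 : i' = i - 1 := by omega
            rw [e2]; exact hxr.le
          · rw [hs_nei j' i' h1, hs_nei j' (i'+1) h2]
            exact ht.2.2.1 j' i' hi'
      · rw [hs_nej j' i' hj', hs_nej j' (i'+1) hj']
        exact ht.2.2.1 j' i' hi'
    · by_cases hc : j' = j ∧ i' = i
      · obtain ⟨hc1, hc2⟩ := hc; subst hc1; subst hc2
        rw [hs_j, hs_nei _ (i'+1) (by omega)]
        exact le_of_lt (hdisj hj')
      · rw [hs_ne j' i' hc]
        by_cases hc2 : (⟨j'.val+1, hj'⟩ : Fin k) = j ∧ i' + 1 = i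
        · obtain ⟨hc1, hc2'⟩ := hc2
          have e1 : s ⟨j'.val+1, hj'⟩ (i'+1) = x := by rw [hc2', hc1, hs_j]
          rw [e1]
          have e2 := ht.2.2.2 j' hj' i' hi'
          rw [hc2', hc1] at e2
          exact le_of_lt (lt_of_le_of_lt e2 hax)
        · rw [hs_ne _ (i'+1) hc2]
          exact ht.2.2.2 j' hj' i' hi'
  · -- the length estimate
    set raw : (Fin k → ℕ → ℝ) → ℕ → ℝ := fun u i' =>
      ∑ j' : Fin k, (f i' (u j' (i' - 1)) - lml (f i') (u j' i')) with hraw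
    set cor : (Fin k → ℕ → ℝ) → ℕ → ℝ := fun u i' =>
      ∑ j' : Fin k, (if hj : j'.val + 1 < k then
          (if u j' (i' - 1) = u ⟨j'.val + 1, hj⟩ i' then
            f i' (u j' (i' - 1)) - lml (f i') (u j' (i' - 1)) else 0)
        else 0) with hcor
    have hUL : ∀ u : Fin k → ℕ → ℝ, unionLen f n k u
        = ∑ i' ∈ Finset.Icc 1 n, (raw u i' - cor u i') := fun u => rfl
    have hii1 : i ≠ i + 1 := by omega
    have hTsub : ({i, i+1} : Finset ℕ) ⊆ Finset.Icc 1 n := by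
      intro z hz
      rcases Finset.mem_insert.1 hz with h | h
      · subst h; exact Finset.mem_Icc.2 ⟨hi1, by omega⟩
      · rw [Finset.mem_singleton.1 h]; exact Finset.mem_Icc.2 ⟨by omega, hin⟩
    have hsplit : unionLen f n k s - unionLen f n k t
        = ((raw s i - cor s i) + (raw s (i+1) - cor s (i+1)))
          - ((raw t i - cor t i) + (raw t (i+1) - cor t (i+1))) := by
      rw [hUL s, hUL t]
      rw [sum_sub_eq_sum_sub hTsub _ _ ?_]
      · rw [Finset.sum_pair hii1, Finset.sum_pair hii1]
      · intro i' _ hi'T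
        have hne1 : i' ≠ i := fun h => hi'T (by rw [h]; exact Finset.mem_insert_self _ _)
        have hne2 : i' ≠ i + 1 := fun h => hi'T (by
          rw [h]; exact Finset.mem_insert_of_mem (Finset.mem_singleton_self _))
        have e1 : ∀ j'' : Fin k, s j'' (i'-1) = t j'' (i'-1) :=
          fun j'' => hs_nei _ _ (by omega)
        have e2 : ∀ j'' : Fin k, s j'' i' = t j'' i' :=
          fun j'' => hs_nei _ _ (by omega)
        have er : raw s i' = raw t i' := by
          rw [hraw]
          exact Finset.sum_congr rfl fun j'' _ => by rw [e1, e2]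
        have ec : cor s i' = cor t i' := by
          rw [hcor]
          refine Finset.sum_congr rfl fun j'' _ => ?_
          by_cases hj'' : j''.val + 1 < k
          · rw [dif_pos hj'', dif_pos hj'', e1, e2]
          · rw [dif_neg hj'', dif_neg hj'']
        rw [er, ec]
    -- line i : raw difference
    have hrawi : raw s i - raw t i = lml (f i) (t j i) - lml (f i) x := by
      rw [hraw]
      rw [sum_sub_single j _ _ ?_]
      · rw [hs_nei j (i-1) (by omega), hs_j]
        ring
      · intro j' hj'
        rw [hs_nej j' (i-1) hj', hs_nej j' i hj']
    -- line i : correction difference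
    have hcori : cor s i - cor t i ≤ f i x - lml (f i) x := by
      have hjump_x : 0 ≤ f i x - lml (f i) x := by
        have := hjmp i hi1 (by omega) x hx0; linarith
      rcases Nat.eq_zero_or_pos j.val with hj0 | hjpos
      · have : cor s i = cor t i := by
          rw [hcor]
          refine Finset.sum_congr rfl fun j'' _ => ?_
          by_cases hj'' : j''.val + 1 < k
          · have hne : (⟨j''.val + 1, hj''⟩ : Fin k) ≠ j := by
              intro hcc
              have := congrArg Fin.val hcc
              simp only at this
              omega
            rw [dif_pos hj'', dif_pos hj'', hs_nei _ (i-1) (by omega),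
              hs_nej _ i hne]
          · rw [dif_neg hj'', dif_neg hj'']
        rw [this]; linarith
      · set jm : Fin k := ⟨j.val - 1, by omega⟩ with hjm
        have hjmj : jm ≠ j := by
          intro hcc
          have := congrArg Fin.val hcc
          simp only [hjm] at this
          omega
        have hjm1 : jm.val + 1 < k := by
          have := j.isLt
          simp only [hjm]
          omega
        have hjm1j : (⟨jm.val + 1, hjm1⟩ : Fin k) = j := by
          apply Fin.ext
          simp only [hjm]
          omega
        rw [hcor]
        rw [sum_sub_single jm _ _ ?_]
        · -- the changed term
          rw [dif_pos hjm1, dif_pos hjm1, hjm1j, hs_j,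
            hs_nei jm (i-1) (by omega)]
          have hcT : (0:ℝ) ≤ (if t jm (i - 1) = t j i then
              f i (t jm (i - 1)) - lml (f i) (t jm (i - 1)) else 0) := by
            by_cases hcc : t jm (i-1) = t j i
            · rw [if_pos hcc]
              have h0 := tuple_nonneg ht jm (show i - 1 ≤ n by omega)
              have := hjmp i hi1 (by omega) (t jm (i-1)) h0
              linarith
            · rw [if_neg hcc]
          have hcS : (if t jm (i - 1) = x then
              f i (t jm (i - 1)) - lml (f i) (t jm (i - 1)) else 0)
              ≤ f i x - lml (f i) x := by
            by_cases hcc : t jm (i-1) = x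
            · rw [if_pos hcc, hcc]
            · rw [if_neg hcc]; exact hjump_x
          linarith
        · intro j' hj'
          by_cases hj'' : j'.val + 1 < k
          · have hne : (⟨j'.val + 1, hj''⟩ : Fin k) ≠ j := by
              intro hcc
              have h1 := congrArg Fin.val hcc
              simp only at h1
              apply hj'
              apply Fin.ext
              simp only [hjm]
              omega
            rw [dif_pos hj'', dif_pos hj'', hs_nei _ (i-1) (by omega),
              hs_nej _ i hne]
          · rw [dif_neg hj'', dif_neg hj'']
    -- line i+1 : raw difference
    have hrawi1 : raw s (i+1) - raw t (i+1) = f (i+1) x - f (i+1) (t j i) := by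
      rw [hraw]
      rw [sum_sub_single j _ _ ?_]
      · have e0 : i + 1 - 1 = i := by omega
        rw [e0, hs_j, hs_nei j (i+1) (by omega)]
        ring
      · intro j' hj'
        rw [hs_nej j' (i+1-1) hj', hs_nej j' (i+1) hj']
    -- line i+1 : correction difference
    have hcori1 : cor s (i+1) - cor t (i+1) ≤ 0 := by
      rw [hcor]
      rw [sum_sub_single j _ _ ?_]
      · have e0 : i + 1 - 1 = i := by omega
        by_cases hj'' : j.val + 1 < k
        · rw [dif_pos hj'', dif_pos hj'', e0, hs_j, hs_nei _ (i+1) (by omega)]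
          have hcS : (if x = t ⟨j.val+1, hj''⟩ (i+1) then
              f (i+1) (s j i) - lml (f (i+1)) (s j i) else 0) = 0 := by
            rw [if_neg (ne_of_lt (hdisj hj''))]
          rw [hs_j] at hcS
          rw [hcS]
          have h0 := tuple_nonneg ht j (show i ≤ n by omega)
          by_cases hcc : t j i = t ⟨j.val+1, hj''⟩ (i+1)
          · rw [if_pos hcc]
            have := hjmp (i+1) (by omega) hin (t j i) h0
            linarith
          · rw [if_neg hcc]; norm_num
        · rw [dif_neg hj'', dif_neg hj'']; linarith
      · intro j' hj'
        by_cases hj'' : j'.val + 1 < k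
        · have e0 : i + 1 - 1 = i := by omega
          rw [dif_pos hj'', dif_pos hj'', e0, hs_nej _ i hj',
            hs_nei _ (i+1) (by omega)]
        · rw [dif_neg hj'', dif_neg hj'']
    linarith [hsplit, hrawi, hcori, hrawi1, hcori1]

lemma part1 {n : ℕ} (hn : 1 ≤ n) (f : ℕ → ℝ → ℝ)
    (hcad : ∀ i : ℕ, 1 ≤ i → i ≤ n → Cadlag (f i))
    (hjmp : ∀ i : ℕ, 1 ≤ i → i ≤ n → NonnegJumps (f i))
    (hlimsup : ∀ j : ℕ, 1 ≤ j → j ≤ n - 1 →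
      ∀ M T : ℝ, ∃ x : ℝ, T ≤ x ∧ M ≤ f (j + 1) x - f j x)
    {k : ℕ} (hk1 : 1 ≤ k) (hkn : k ≤ n)
    (τ : Fin k → ℕ → EReal) (hτ : IsInfOpt f n k τ) :
    ∀ (j : Fin k) (i : ℕ), i ≤ n → τ j i = constTup n k j i := by
  obtain ⟨ℓ, t, hℓ, hopt, hconv⟩ := hτ
  have htuple : ∀ m, IsTuple n k (ℓ m) (t m) := fun m => (hopt m).1
  have htop : ∀ (j : Fin k) (i : ℕ), i ≤ n → τ j i = ⊤ →
      ∀ x : ℝ, ∀ᶠ m in atTop, x < t m j i := by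
    intro j i hi htopi x
    have h1 := hconv j i hi
    rw [htopi, EReal.tendsto_nhds_top_iff_real] at h1
    filter_upwards [h1 x] with m hm
    exact_mod_cast hm
  have hnonneg : ∀ (j : Fin k) (i : ℕ), i ≤ n → 0 ≤ τ j i := by
    intro j i hi
    refine le_of_tendsto_of_tendsto' tendsto_const_nhds (hconv j i hi) fun m => ?_
    exact_mod_cast tuple_nonneg (htuple m) j hi
  have hτ0 : ∀ j : Fin k, τ j 0 = ⊤ := by
    intro j
    refine tendsto_nhds_unique (hconv j 0 (by omega)) ?_
    have he : (fun m => ((t m j 0 : ℝ) : EReal)) = fun m => ((ℓ m : ℝ) : EReal) := by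
      funext m; rw [(htuple m).2.1 j]
    rw [he, EReal.tendsto_nhds_top_iff_real]
    intro x
    filter_upwards [hℓ.eventually_ge_atTop (x+1)] with m hm
    exact_mod_cast (by linarith : x < ℓ m)
  have main : ∀ d : ℕ, ∀ j : Fin k, k - j.val ≤ d →
      ∀ i : ℕ, i ≤ n → τ j i = constTup n k j i := by
    intro d
    induction d with
    | zero =>
      intro j hjd
      exact absurd hjd (by have := j.isLt; omega)
    | succ d IH =>
      intro j hjd
      have htops : ∀ i : ℕ, i ≤ n - k + j.val → 1 ≤ i → τ j i = ⊤ := by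
        intro i
        induction i using Nat.strong_induction_on with
        | _ i IH2 =>
        intro hile hi1
        by_contra hne
        have hge0 := hnonneg j i (by omega)
        have hnebot : τ j i ≠ ⊥ := (lt_of_lt_of_le EReal.bot_lt_zero hge0).ne'
        set c := (τ j i).toReal with hc
        have hceq : ((c : ℝ) : EReal) = τ j i := EReal.coe_toReal hne hnebot
        have hc0 : 0 ≤ c := by
          rw [← EReal.coe_nonneg (x := c), hceq]; exact hge0
        have hreal : Tendsto (fun m => t m j i) atTop (nhds c) := by
          have h1 := hconv j i (by omega)
          rw [← hceq] at h1
          exact EReal.tendsto_coe.1 h1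
        have hprev : τ j (i-1) = ⊤ := by
          rcases Nat.eq_zero_or_pos (i-1) with h0 | hpos
          · rw [h0]; exact hτ0 j
          · exact IH2 (i-1) (by omega) (by omega) (by omega)
        obtain ⟨M1, hM10, hM1f, hM1l⟩ := cadlag_bdd (hcad (i+1) (by omega) (by omega)) (c+1)
        obtain ⟨M2, hM20, hM2f, hM2l⟩ := cadlag_bdd (hcad i hi1 (by omega)) (c+1)
        obtain ⟨x, hxT, hxM⟩ := hlimsup i hi1 (by omega) (M1 + M2 + 1) (c + 2)
        have F1 : ∀ᶠ m in atTop, t m j i < c + 1 := by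
          filter_upwards [eventually_abs_lt hreal one_pos] with m hm
          have := abs_lt.1 hm; linarith
        have F2 : ∀ᶠ m in atTop, x < t m j (i-1) := htop j (i-1) (by omega) hprev x
        have F3 : ∀ᶠ m in atTop, ∀ hj : j.val + 1 < k, x < t m ⟨j.val+1, hj⟩ (i+1) := by
          by_cases hjk : j.val + 1 < k
          · have hcjt : τ ⟨j.val+1, hjk⟩ (i+1) = ⊤ := by
              have h1 := IH ⟨j.val+1, hjk⟩ (by show k - (j.val+1) ≤ d; omega) (i+1) (by omega)
              rw [h1]
              show (if n - k + 1 + (j.val+1) ≤ i + 1 then (0:EReal) else ⊤) = ⊤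
              rw [if_neg (by omega)]
            filter_upwards [htop ⟨j.val+1, hjk⟩ (i+1) (by omega) hcjt x] with m hm
            intro _; exact hm
          · filter_upwards [] with m
            intro hj; exact absurd hj hjk
        obtain ⟨m, hm1, hm2, hm3⟩ := (F1.and (F2.and F3)).exists
        have hax : t m j i < x := by linarith
        obtain ⟨s, hst, hineq⟩ :=
          exchange f (htuple m) hjmp j hi1 (by omega) hax hm2 hm3
        have hle := (hopt m).2 s hst
        have ha1 : 0 ≤ t m j i := tuple_nonneg (htuple m) j (by omega)
        have hfa := abs_le.1 (hM1f _ ha1 (by linarith))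
        have hla := abs_le.1 (hM2l _ ha1 (by linarith))
        linarith [hfa.2, hla.1]
      have hzeros : ∀ i : ℕ, n - k + 1 + j.val ≤ i → i ≤ n → τ j i = 0 := by
        intro i hi0 hin'
        rcases eq_or_lt_of_le hin' with he | hlt
        · subst he
          have he2 : (fun m => ((t m j i : ℝ) : EReal)) = fun _ => ((0:ℝ) : EReal) := by
            funext m; rw [(htuple m).1 j]
          have h0 : Tendsto (fun m => ((t m j i : ℝ) : EReal)) atTop (nhds ((0:ℝ) : EReal)) := by
            rw [he2]; exact tendsto_const_nhds
          have hq := tendsto_nhds_unique (hconv j i le_rfl) h0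
          rw [hq]; exact_mod_cast rfl
        · have hjk : j.val + 1 < k := by
            have := j.isLt; omega
          have hup := IH ⟨j.val+1, hjk⟩ (by show k - (j.val+1) ≤ d; omega) (i+1) (by omega)
          have hub : constTup n k ⟨j.val+1, hjk⟩ (i+1) = 0 := by
            show (if n - k + 1 + (j.val+1) ≤ i + 1 then (0:EReal) else ⊤) = 0
            rw [if_pos (by omega)]
          have hle1 : τ j i ≤ τ ⟨j.val+1, hjk⟩ (i+1) := by
            refine le_of_tendsto_of_tendsto' (hconv j i hin') (hconv _ (i+1) (by omega))
              fun m => ?_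
            exact_mod_cast (htuple m).2.2.2 j hjk i hlt
          rw [hup, hub] at hle1
          exact le_antisymm hle1 (hnonneg j i hin')
      intro i hin'
      rcases Nat.eq_zero_or_pos i with h0 | hipos
      · subst h0
        rw [hτ0 j]
        show ⊤ = (if n - k + 1 + j.val ≤ 0 then (0:EReal) else ⊤)
        rw [if_neg (by omega)]
      · rcases le_or_gt (n - k + 1 + j.val) i with hge | hlti
        · rw [hzeros i hge hin']
          show (0:EReal) = (if n - k + 1 + j.val ≤ i then (0:EReal) else ⊤)
          rw [if_pos hge]
        · rw [htops i (by omega) hipos]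
          show ⊤ = (if n - k + 1 + j.val ≤ i then (0:EReal) else ⊤)
          rw [if_neg (by omega)]
  intro j i hi
  exact main k j (by omega) i hi

lemma part2 {n : ℕ} (hn : 1 ≤ n) (f : ℕ → ℝ → ℝ)
    (hcad : ∀ i : ℕ, 1 ≤ i → i ≤ n → Cadlag (f i))
    (hjmp : ∀ i : ℕ, 1 ≤ i → i ≤ n → NonnegJumps (f i))
    (hlimsup : ∀ j : ℕ, 1 ≤ j → j ≤ n - 1 →
      ∀ M T : ℝ, ∃ x : ℝ, T ≤ x ∧ M ≤ f (j + 1) x - f j x)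
    {k : ℕ} (hk1 : 1 ≤ k) (hkn : k ≤ n) :
    IsInfOpt f n k (constTup n k) := by
  classical
  have hex : ∀ m : ℕ, ∃ t : Fin k → ℕ → ℝ, IsOpt f n k ((m : ℕ) : ℝ) t :=
    fun m => exists_opt f hn hk1 hkn hcad hjmp (Nat.cast_nonneg m)
  choose t hta using hex
  set u : ℕ → (Fin k × Fin (n+1) → EReal) :=
    fun m p => ((t m p.1 p.2.val : ℝ) : EReal) with hu
  obtain ⟨g, -, φ, hφ, hgconv⟩ := isCompact_univ.tendsto_subseq (x := u)
    (fun m => Set.mem_univ _)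
  set τ : Fin k → ℕ → EReal := fun j i => if h : i ≤ n then g (j, ⟨i, by omega⟩) else 0
    with hτdef
  have hconvτ : ∀ (j : Fin k) (i : ℕ), i ≤ n →
      Tendsto (fun m => ((t (φ m) j i : ℝ) : EReal)) atTop (nhds (τ j i)) := by
    intro j i hi
    have h1 := (tendsto_pi_nhds.1 hgconv) (j, ⟨i, by omega⟩)
    rw [hτdef]
    simp only [dif_pos hi]
    exact h1
  have hIsInf : IsInfOpt f n k τ := by
    refine ⟨fun m => ((φ m : ℕ) : ℝ), fun m => t (φ m),
      tendsto_natCast_atTop_atTop.comp hφ.tendsto_atTop,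
      fun m => hta (φ m), hconvτ⟩
  have happly := part1 hn f hcad hjmp hlimsup hk1 hkn τ hIsInf
  refine ⟨fun m => ((φ m : ℕ) : ℝ), fun m => t (φ m),
    tendsto_natCast_atTop_atTop.comp hφ.tendsto_atTop,
    fun m => hta (φ m), fun j i hi => ?_⟩
  rw [← happly j i hi]
  exact hconvτ j i hi

theorem stmt9 (n : ℕ) (hn : 1 ≤ n) (f : ℕ → ℝ → ℝ)
    (hcad : ∀ i : ℕ, 1 ≤ i → i ≤ n → Cadlag (f i))
    (hjmp : ∀ i : ℕ, 1 ≤ i → i ≤ n → NonnegJumps (f i))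
    (hlimsup : ∀ j : ℕ, 1 ≤ j → j ≤ n - 1 →
      ∀ M T : ℝ, ∃ x : ℝ, T ≤ x ∧ M ≤ f (j + 1) x - f j x)
    (k : ℕ) (hk1 : 1 ≤ k) (hkn : k ≤ n) :
    (∀ τ : Fin k → ℕ → EReal, IsInfOpt f n k τ →
      ∀ (j : Fin k) (i : ℕ), i ≤ n → τ j i = constTup n k j i) ∧
    IsInfOpt f n k (constTup n k) := by
  exact ⟨fun τ hτ => part1 hn f hcad hjmp hlimsup hk1 hkn τ hτ,
    part2 hn f hcad hjmp hlimsup hk1 hkn⟩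
end

section
/- (Quadrangle inequality for single paths on two lines.) Let f₁, f₂ be cadlag with nonnegative jumps and define L(x,y) = f₁(y) - f₂(x⁻) + sup_{z∈[x,y]}(f₂(z)-f₁(z⁻)) for x ≤ y. Then for x ≤ x' and y ≤ y' with x' ≤ y, we have L(x,y') + L(x',y) ≤ L(x,y) + L(x',y'). -/
/-!
The boundary terms `f₁ y' - f₂(x⁻)` and `f₁ y - f₂(x'⁻)` on the left reappear on the right, so
only the suprema `S` of `g z = f₂ z - f₁(z⁻)` have to be compared. Since
`[x, y'] = [x, y] ∪ [x', y']` and `[x', y] = [x, y] ∩ [x', y']`, the inequality is submodularity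
of `A ↦ sup_A g`: `max a b + c ≤ a + b` whenever `c ≤ min a b`. Cadlag functions are bounded on
compact intervals, which keeps every supremum finite.
-/

open Filter Set Topology

/-- Two-line last passage value from `(x,2)` to `(y,1)`. -/
noncomputable def Lval (f₁ f₂ : ℝ → ℝ) (x y : ℝ) : ℝ := f₁ y - lml f₂ x + S f₁ f₂ x y

lemma csSup_image_union_add_csSup_image_inter_le {α β : Type*}
    [ConditionallyCompleteLinearOrder β] [AddCommMonoid β] [IsOrderedAddMonoid β]
    {f : α → β} {s t : Set α} (hs : BddAbove (f '' s)) (ht : BddAbove (f '' t))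
    (hst : (s ∩ t).Nonempty) :
    sSup (f '' (s ∪ t)) + sSup (f '' (s ∩ t)) ≤ sSup (f '' s) + sSup (f '' t) := by
  have hne : (f '' (s ∩ t)).Nonempty := hst.image f
  have hinter : sSup (f '' (s ∩ t)) ≤ min (sSup (f '' s)) (sSup (f '' t)) :=
    le_min (csSup_le_csSup hs hne (image_mono inter_subset_left))
      (csSup_le_csSup ht hne (image_mono inter_subset_right))
  rw [image_union, csSup_union hs ((hst.mono inter_subset_left).image f) ht
    ((hst.mono inter_subset_right).image f)]
  exact (add_le_add_right hinter _).trans_eq (max_add_min _ _)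

namespace Cadlag

variable {f : ℝ → ℝ}

lemma isBoundedUnder_abs_nhdsWithin (hf : Cadlag f) {s : Set ℝ} (hs : s ⊆ Ici 0) {t : ℝ}
    (ht : t ∈ s) : IsBoundedUnder (· ≤ ·) (𝓝[s] t) (fun z => |f z|) := by
  rcases (show 0 ≤ t from hs ht).eq_or_lt with rfl | ht0
  · exact (hf.1 0 le_rfl).tendsto.abs.isBoundedUnder_le.mono (nhdsWithin_mono _ hs)
  · obtain ⟨l, hl⟩ := hf.2 t ht0
    refine IsBoundedUnder.mono nhdsWithin_le_nhds ?_
    rw [← nhdsLT_sup_nhdsGE, IsBoundedUnder, map_sup]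
    exact isBounded_sup hl.abs.isBoundedUnder_le (hf.1 t ht0.le).tendsto.abs.isBoundedUnder_le

lemma bddAbove_abs_image_Icc (hf : Cadlag f) {a : ℝ} (ha : 0 ≤ a) (b : ℝ) :
    BddAbove ((fun z => |f z|) '' Icc a b) := by
  refine isCompact_Icc.induction_on (p := fun u => BddAbove ((fun z => |f z|) '' u)) (by simp)
    (fun u v huv hv => hv.mono (image_mono huv))
    (fun u v hu hv => by rw [image_union]; exact hu.union hv) fun t ht => ?_
  obtain ⟨M, hM⟩ :=
    (hf.isBoundedUnder_abs_nhdsWithin (fun z hz => ha.trans hz.1) ht).eventually_le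
  exact ⟨{z | |f z| ≤ M}, hM, M, by rintro _ ⟨z, hz, rfl⟩; exact hz⟩

lemma bddAbove_abs_lml_image_Icc (hf : Cadlag f) (a b : ℝ) :
    BddAbove ((fun z => |lml f z|) '' Icc a b) := by
  obtain ⟨M, hM⟩ := hf.bddAbove_abs_image_Icc le_rfl b
  refine ⟨max M 0, ?_⟩
  rintro _ ⟨z, hz, rfl⟩
  dsimp only [lml]
  split_ifs with hz0
  · simp
  · obtain ⟨l, hl⟩ := hf.2 z (not_le.mp hz0)
    rw [leftLim_eq_of_tendsto hl]
    refine le_max_of_le_left (le_of_tendsto hl.abs ?_)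
    filter_upwards [Ioo_mem_nhdsLT (not_le.mp hz0)] with w hw
    exact hM ⟨w, ⟨hw.1.le, hw.2.le.trans hz.2⟩, rfl⟩

end Cadlag

lemma bddAbove_image_sub_lml_Icc {f₁ f₂ : ℝ → ℝ} (h₁ : Cadlag f₁) (h₂ : Cadlag f₂) {a : ℝ}
    (ha : 0 ≤ a) (b : ℝ) : BddAbove ((fun z => f₂ z - lml f₁ z) '' Icc a b) := by
  obtain ⟨M₂, hM₂⟩ := h₂.bddAbove_abs_image_Icc ha b
  obtain ⟨M₁, hM₁⟩ := h₁.bddAbove_abs_lml_image_Icc a b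
  refine ⟨M₂ + M₁, ?_⟩
  rintro _ ⟨z, hz, rfl⟩
  have h₂z : |f₂ z| ≤ M₂ := hM₂ ⟨z, hz, rfl⟩
  have h₁z : |lml f₁ z| ≤ M₁ := hM₁ ⟨z, hz, rfl⟩
  linarith [le_abs_self (f₂ z), neg_abs_le (lml f₁ z)]

lemma S_add_S_le_of_bddAbove {f₁ f₂ : ℝ → ℝ} {x x' y y' : ℝ}
    (hbdd : BddAbove ((fun z => f₂ z - lml f₁ z) '' Icc x y'))
    (hxx' : x ≤ x') (hx'y : x' ≤ y) (hyy' : y ≤ y') :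
    S f₁ f₂ x y' + S f₁ f₂ x' y ≤ S f₁ f₂ x y + S f₁ f₂ x' y' := by
  have hunion : Icc x y ∪ Icc x' y' = Icc x y' := by
    rw [Icc_union_Icc' hx'y (hxx'.trans (hx'y.trans hyy')), min_eq_left hxx',
      max_eq_right hyy']
  have hinter : Icc x y ∩ Icc x' y' = Icc x' y := by
    rw [Icc_inter_Icc, sup_eq_right.mpr hxx', inf_eq_left.mpr hyy']
  have key := csSup_image_union_add_csSup_image_inter_le
    (hbdd.mono (image_mono (hunion ▸ subset_union_left)))
    (hbdd.mono (image_mono (hunion ▸ subset_union_right)))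
    (hinter ▸ nonempty_Icc.mpr hx'y)
  rwa [hunion, hinter] at key

theorem stmt10_general (f₁ f₂ : ℝ → ℝ) (h₁ : Cadlag f₁) (h₂ : Cadlag f₂)
    (x x' y y' : ℝ) (hx : 0 ≤ x) (hxx' : x ≤ x') (hx'y : x' ≤ y) (hyy' : y ≤ y') :
    Lval f₁ f₂ x y' + Lval f₁ f₂ x' y ≤ Lval f₁ f₂ x y + Lval f₁ f₂ x' y' := by
  have hS := S_add_S_le_of_bddAbove (bddAbove_image_sub_lml_Icc h₁ h₂ hx y') hxx' hx'y hyy'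
  simp only [Lval]
  linarith

theorem stmt10 (f₁ f₂ : ℝ → ℝ) (h₁ : Cadlag f₁) (h₂ : Cadlag f₂)
    (hj₁ : NonnegJumps f₁) (hj₂ : NonnegJumps f₂)
    (x x' y y' : ℝ) (hx : 0 ≤ x) (hxx' : x ≤ x') (hx'y : x' ≤ y) (hyy' : y ≤ y') :
    Lval f₁ f₂ x y' + Lval f₁ f₂ x' y ≤ Lval f₁ f₂ x y + Lval f₁ f₂ x' y' :=
  stmt10_general f₁ f₂ h₁ h₂ x x' y y' hx hxx' hx'y hyy'
end
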